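/- arXiv:2211.15108 — 3 statements merged into one kernel-verified Lean document; each statement's English description precedes it below -/
import Mathlib

section
/- Let θ₁, φ₁, θ₂, φ₂ ∈ [0,π] satisfy sin θ₁ = sin φ₁ and sin θ₂ = sin φ₂ (i.e. both channels N_{φ₁,θ₁} and N_{φ₂,θ₂} are quasi-extreme points of the set of qubit channels). Then side entanglement is not useful for discriminating N₁ = N_{φ₁,θ₁} from N₂ = N_{φ₂,θ₂}: S₂ = S₁. -/
open Matrix
open scoped Kronecker

noncomputable section

/-- First Kraus operator of the extremal qubit channel `N_{φ,θ}`: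
diagonal entries `cos θ` and `cos φ`. -/
def K0 (φ θ : ℝ) : Matrix (Fin 2) (Fin 2) ℂ :=
  !![(Real.cos θ : ℂ), 0; 0, (Real.cos φ : ℂ)]

/-- Second Kraus operator of the extremal qubit channel `N_{φ,θ}`:
(1,2)-entry `sin φ`, (2,1)-entry `sin θ`. -/
def K1 (φ θ : ℝ) : Matrix (Fin 2) (Fin 2) ℂ :=
  !![0, (Real.sin φ : ℂ); (Real.sin θ : ℂ), 0]

/-- The qubit channel `N_{φ,θ}(ρ) = K₀ ρ K₀* + K₁ ρ K₁*`. -/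
def chan (φ θ : ℝ) (ρ : Matrix (Fin 2) (Fin 2) ℂ) : Matrix (Fin 2) (Fin 2) ℂ :=
  K0 φ θ * ρ * (K0 φ θ)ᴴ + K1 φ θ * ρ * (K1 φ θ)ᴴ

/-- The 2×2 identity matrix. -/
def I2 : Matrix (Fin 2) (Fin 2) ℂ := 1

/-- The channel `id ⊗ N_{φ,θ}` on two qubits, via Kronecker products of the Kraus
operators with the identity. -/
def chanE (φ θ : ℝ) (ρ : Matrix (Fin 2 × Fin 2) (Fin 2 × Fin 2) ℂ) :
    Matrix (Fin 2 × Fin 2) (Fin 2 × Fin 2) ℂ :=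
  (I2 ⊗ₖ K0 φ θ) * ρ * (I2 ⊗ₖ K0 φ θ)ᴴ + (I2 ⊗ₖ K1 φ θ) * ρ * (I2 ⊗ₖ K1 φ θ)ᴴ

open scoped Classical in
/-- Trace norm of a Hermitian matrix: the sum of the absolute values of its
eigenvalues (junk value `0` for non-Hermitian input). -/
def traceNorm {n : Type*} [Fintype n] [DecidableEq n] (M : Matrix n n ℂ) : ℝ :=
  if h : M.IsHermitian then ∑ i, |h.eigenvalues i| else 0

/-- The rank-one projector `ρ_v = v v*` on one qubit. -/
def outer2 (v : EuclideanSpace ℂ (Fin 2)) : Matrix (Fin 2) (Fin 2) ℂ :=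
  fun i j => v i * star (v j)

/-- The rank-one projector `ρ_w = w w*` on two qubits. -/
def outer4 (w : EuclideanSpace ℂ (Fin 2 × Fin 2)) :
    Matrix (Fin 2 × Fin 2) (Fin 2 × Fin 2) ℂ :=
  fun i j => w i * star (w j)

/-- Optimal single-qubit distinguishability of `N_{φ₁,θ₁}` and `N_{φ₂,θ₂}`. -/
def S1 (φ₁ θ₁ φ₂ θ₂ : ℝ) : ℝ :=
  ⨆ v : {v : EuclideanSpace ℂ (Fin 2) // ‖v‖ = 1},
    traceNorm (chan φ₁ θ₁ (outer2 v.1) - chan φ₂ θ₂ (outer2 v.1))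

/-- Optimal entanglement-assisted distinguishability of `N_{φ₁,θ₁}` and `N_{φ₂,θ₂}`. -/
def S2 (φ₁ θ₁ φ₂ θ₂ : ℝ) : ℝ :=
  ⨆ w : {w : EuclideanSpace ℂ (Fin 2 × Fin 2) // ‖w‖ = 1},
    traceNorm (chanE φ₁ θ₁ (outer4 w.1) - chanE φ₂ θ₂ (outer4 w.1))

open scoped ComplexOrder

variable {n : Type*} [Fintype n] [DecidableEq n]


omit [DecidableEq n] in
lemma conj_diag_entry (X U : Matrix n n ℂ) (i : n) :
    (star U * X * U) i i = dotProduct (star (fun k => U k i)) (X *ᵥ (fun k => U k i)) := by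
  simp only [Matrix.mul_apply, dotProduct, Matrix.mulVec, Matrix.star_apply,
    dotProduct, Pi.star_apply, Finset.sum_mul, Finset.mul_sum]
  rw [Finset.sum_comm]
  apply Finset.sum_congr rfl; intro j _
  apply Finset.sum_congr rfl; intro k _
  ring

lemma sum_conj_diag (X U : Matrix n n ℂ) (hU : U * star U = 1) :
    ∑ i, (star U * X * U) i i = X.trace := by
  have h : ∑ i, (star U * X * U) i i = (star U * X * U).trace := rfl
  rw [h, Matrix.trace_mul_cycle, hU, Matrix.one_mul]

lemma psd_diag_entry (A : Matrix n n ℂ) (hA : A.PosSemidef) (i : n) :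
    A i i = ((A i i).re : ℂ) ∧ 0 ≤ (A i i).re := by
  have h2 := hA.dotProduct_mulVec_nonneg (Pi.single i 1)
  have h : dotProduct (star (Pi.single i 1)) (A *ᵥ (Pi.single i 1)) = A i i := by
    simp [Matrix.mulVec_single, dotProduct, Pi.single_apply]
  rw [h] at h2
  rw [Complex.le_def] at h2
  obtain ⟨hre, him⟩ := h2
  simp only [Complex.zero_re, Complex.zero_im] at hre him
  exact ⟨Complex.ext (by simp) (by simp [← him]), hre⟩

lemma real_smul_isHermitian {P : Matrix n n ℂ} (hP : P.IsHermitian) (r : ℝ) :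
    ((r:ℂ) • P).IsHermitian := by
  unfold Matrix.IsHermitian at *
  rw [Matrix.conjTranspose_smul, hP]
  simp [Complex.star_def, Complex.conj_ofReal]

theorem traceNorm_le_of_decomp (M A B C : Matrix n n ℂ) (α β γ : ℝ)
    (hA : A.PosSemidef) (hB : B.PosSemidef) (hC : C.PosSemidef)
    (tA : A.trace = 1) (tB : B.trace = 1) (tC : C.trace = 1)
    (hM : M = (α:ℂ) • A + (β:ℂ) • B + (γ:ℂ) • C) :
    traceNorm M ≤ |α| + |β| + |γ| := by
  have hHerm : M.IsHermitian := by
    rw [hM]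
    exact ((real_smul_isHermitian hA.1 α).add (real_smul_isHermitian hB.1 β)).add
      (real_smul_isHermitian hC.1 γ)
  rw [traceNorm, dif_pos hHerm]
  set U := (Matrix.IsHermitian.eigenvectorUnitary hHerm : Matrix n n ℂ) with hUdef
  have hUmem : U ∈ Matrix.unitaryGroup n ℂ := (Matrix.IsHermitian.eigenvectorUnitary hHerm).2
  have hU2 : U * star U = 1 := Matrix.mem_unitaryGroup_iff.mp hUmem
  have hdiag : ∀ i, (star U * M * U) i i = (hHerm.eigenvalues i : ℂ) := by
    intro i
    rw [Matrix.star_eq_conjTranspose] at *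
    rw [show Uᴴ * M * U = Matrix.diagonal (RCLike.ofReal ∘ hHerm.eigenvalues) from by
      have h := hHerm.conjStarAlgAut_star_eigenvectorUnitary
      rw [Unitary.conjStarAlgAut_star_apply] at h; exact h]
    simp
  have hApsd : (star U * A * U).PosSemidef := by
    rw [Matrix.star_eq_conjTranspose]; exact hA.conjTranspose_mul_mul_same U
  have hBpsd : (star U * B * U).PosSemidef := by
    rw [Matrix.star_eq_conjTranspose]; exact hB.conjTranspose_mul_mul_same U
  have hCpsd : (star U * C * U).PosSemidef := by
    rw [Matrix.star_eq_conjTranspose]; exact hC.conjTranspose_mul_mul_same U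
  have key : ∀ i, |hHerm.eigenvalues i| ≤
      |α| * ((star U * A * U) i i).re + |β| * ((star U * B * U) i i).re
        + |γ| * ((star U * C * U) i i).re := by
    intro i
    obtain ⟨haeq, hage⟩ := psd_diag_entry _ hApsd i
    obtain ⟨hbeq, hbge⟩ := psd_diag_entry _ hBpsd i
    obtain ⟨hceq, hcge⟩ := psd_diag_entry _ hCpsd i
    have hsum : (hHerm.eigenvalues i : ℂ)
        = (α:ℂ) * (star U * A * U) i i + (β:ℂ) * (star U * B * U) i i
          + (γ:ℂ) * (star U * C * U) i i := by
      rw [← hdiag i, hM]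
      simp only [Matrix.add_mul, Matrix.mul_add, Matrix.smul_mul, Matrix.mul_smul,
        Matrix.add_apply, Matrix.smul_apply, smul_eq_mul]
    rw [haeq, hbeq, hceq] at hsum
    have hre : hHerm.eigenvalues i = α * ((star U * A * U) i i).re
        + β * ((star U * B * U) i i).re + γ * ((star U * C * U) i i).re := by
      exact_mod_cast hsum
    rw [hre]
    calc |α * _ + β * _ + γ * _| ≤ |α * ((star U * A * U) i i).re
          + β * ((star U * B * U) i i).re| + |γ * ((star U * C * U) i i).re| := abs_add_le _ _
      _ ≤ |α * ((star U * A * U) i i).re| + |β * ((star U * B * U) i i).re|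
          + |γ * ((star U * C * U) i i).re| := by gcongr; exact abs_add_le _ _
      _ ≤ _ := by
          rw [abs_mul, abs_mul, abs_mul, abs_of_nonneg hage, abs_of_nonneg hbge,
            abs_of_nonneg hcge]
  have hsumA : ∑ i, ((star U * A * U) i i).re = 1 := by
    have := sum_conj_diag A U hU2
    have h2 : (∑ i, (star U * A * U) i i).re = (A.trace).re := by rw [this]
    rw [Complex.re_sum] at h2
    rw [h2, tA]; simp
  have hsumB : ∑ i, ((star U * B * U) i i).re = 1 := by
    have := sum_conj_diag B U hU2
    have h2 : (∑ i, (star U * B * U) i i).re = (B.trace).re := by rw [this]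
    rw [Complex.re_sum] at h2
    rw [h2, tB]; simp
  have hsumC : ∑ i, ((star U * C * U) i i).re = 1 := by
    have := sum_conj_diag C U hU2
    have h2 : (∑ i, (star U * C * U) i i).re = (C.trace).re := by rw [this]
    rw [Complex.re_sum] at h2
    rw [h2, tC]; simp
  calc ∑ i, |hHerm.eigenvalues i| ≤ ∑ i, (|α| * ((star U * A * U) i i).re
        + |β| * ((star U * B * U) i i).re + |γ| * ((star U * C * U) i i).re) :=
      Finset.sum_le_sum (fun i _ => key i)
    _ = |α| + |β| + |γ| := by
      rw [Finset.sum_add_distrib, Finset.sum_add_distrib, ← Finset.mul_sum, ← Finset.mul_sum,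
        ← Finset.mul_sum, hsumA, hsumB, hsumC]
      ring

lemma dot_self_re (x : n → ℂ) : (dotProduct (star x) x).re = ∑ k, ‖x k‖^2 := by
  rw [dotProduct, Complex.re_sum]
  refine Finset.sum_congr rfl fun k _ => ?_
  simp only [Pi.star_apply, Complex.star_def, Complex.mul_re, Complex.conj_re, Complex.conj_im,
    Complex.sq_norm, Complex.normSq_apply]
  ring

lemma norm_euclidean_sq (x : EuclideanSpace ℂ n) : ‖x‖^2 = ∑ k, ‖x k‖^2 := by
  rw [EuclideanSpace.norm_eq, Real.sq_sqrt]
  positivity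

lemma inner_eq_dot (x y : EuclideanSpace ℂ n) :
    (inner ℂ x y : ℂ) = dotProduct (star (x : n → ℂ)) (y : n → ℂ) := by
  rw [PiLp.inner_apply, dotProduct]
  simp [RCLike.inner_apply, Pi.star_apply, Complex.star_def, mul_comm]

lemma cs_bound (S : Matrix n n ℂ) (hSU : Sᴴ * S = 1) (x : n → ℂ)
    (hx : ∑ k, ‖x k‖^2 = 1) : |(dotProduct (star x) (S *ᵥ x)).re| ≤ 1 := by
  set x' : EuclideanSpace ℂ n := (WithLp.equiv 2 (n → ℂ)).symm x with hx'
  set y' : EuclideanSpace ℂ n := (WithLp.equiv 2 (n → ℂ)).symm (S *ᵥ x) with hy'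
  have hxn : ‖x'‖ = 1 := by
    have := norm_euclidean_sq x'
    have h1 : ∑ k, ‖x' k‖^2 = 1 := hx
    nlinarith [norm_nonneg x']
  have hyn : ‖y'‖ = 1 := by
    have := norm_euclidean_sq y'
    have h1 : ∑ k, ‖y' k‖^2 = ((dotProduct (star (S *ᵥ x)) (S *ᵥ x)).re) :=
      (dot_self_re _).symm
    have h2 : dotProduct (star (S *ᵥ x)) (S *ᵥ x) = dotProduct (star x) x := by
      rw [Matrix.star_mulVec, ← Matrix.dotProduct_mulVec, Matrix.mulVec_mulVec, hSU,
        Matrix.one_mulVec]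
    rw [h2, dot_self_re x, hx] at h1
    nlinarith [norm_nonneg y']
  have hcs : ‖(inner ℂ x' y' : ℂ)‖ ≤ ‖x'‖ * ‖y'‖ := norm_inner_le_norm x' y'
  rw [hxn, hyn, mul_one] at hcs
  have heq : (inner ℂ x' y' : ℂ) = dotProduct (star x) (S *ᵥ x) := inner_eq_dot x' y'
  calc |(dotProduct (star x) (S *ᵥ x)).re| ≤ ‖(dotProduct (star x) (S *ᵥ x))‖ :=
      Complex.abs_re_le_norm _
    _ ≤ 1 := by rw [← heq]; exact hcs

theorem re_trace_le_traceNorm (M S : Matrix n n ℂ) (hM : M.IsHermitian)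
    (hSU : Sᴴ * S = 1) : |((S * M).trace).re| ≤ traceNorm M := by
  rw [traceNorm, dif_pos hM]
  set U := (Matrix.IsHermitian.eigenvectorUnitary hM : Matrix n n ℂ) with hUdef
  have hUmem : U ∈ Matrix.unitaryGroup n ℂ := (Matrix.IsHermitian.eigenvectorUnitary hM).2
  have hU1 : star U * U = 1 := Matrix.mem_unitaryGroup_iff'.mp hUmem
  have htr : (S * M).trace = ∑ i, (star U * S * U) i i * (hM.eigenvalues i : ℂ) := by
    conv_lhs => rw [hM.spectral_theorem, Unitary.conjStarAlgAut_apply]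
    rw [show S * (U * Matrix.diagonal (RCLike.ofReal ∘ hM.eigenvalues) * star U)
        = (S * U * Matrix.diagonal (RCLike.ofReal ∘ hM.eigenvalues)) * star U by
      simp [Matrix.mul_assoc]]
    rw [Matrix.trace_mul_comm, Matrix.trace]
    apply Finset.sum_congr rfl
    intro i _
    rw [show star U * (S * U * Matrix.diagonal (RCLike.ofReal ∘ hM.eigenvalues))
        = (star U * S * U) * Matrix.diagonal (RCLike.ofReal ∘ hM.eigenvalues) by
      simp [Matrix.mul_assoc]]
    rw [Matrix.diag_apply, Matrix.mul_diagonal]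
    simp
  rw [htr, Complex.re_sum]
  have hbd : ∀ i, |((star U * S * U) i i * (hM.eigenvalues i : ℂ)).re|
      ≤ |hM.eigenvalues i| := by
    intro i
    have hterm : ((star U * S * U) i i * (hM.eigenvalues i : ℂ)).re
        = ((star U * S * U) i i).re * hM.eigenvalues i := by
      simp [Complex.mul_re]
    rw [hterm, abs_mul]
    have hx : ∑ k, ‖U k i‖^2 = 1 := by
      have h1 : (star U * U) i i = 1 := by rw [hU1]; simp
      have h2 := conj_diag_entry (1 : Matrix n n ℂ) U i
      have h3 : (star U * U) i i = dotProduct (star (fun k => U k i)) (fun k => U k i) := by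
        have := conj_diag_entry 1 U i
        rw [Matrix.mul_one] at *
        rw [this, Matrix.one_mulVec]
      have h4 := dot_self_re (fun k => U k i)
      rw [← h4, ← h3, h1]
      simp
    have hd := cs_bound S hSU (fun k => U k i) hx
    have h5 : (star U * S * U) i i = dotProduct (star (fun k => U k i)) (S *ᵥ (fun k => U k i)) :=
      conj_diag_entry S U i
    rw [h5]
    calc |(dotProduct (star fun k => U k i) (S *ᵥ fun k => U k i)).re| * |hM.eigenvalues i|
        ≤ 1 * |hM.eigenvalues i| := by gcongr
      _ = |hM.eigenvalues i| := one_mul _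
  calc |∑ i, ((star U * S * U) i i * (hM.eigenvalues i : ℂ)).re|
      ≤ ∑ i, |((star U * S * U) i i * (hM.eigenvalues i : ℂ)).re| :=
        Finset.abs_sum_le_sum_abs _ _
    _ ≤ ∑ i, |hM.eigenvalues i| := Finset.sum_le_sum (fun i _ => hbd i)

-- chunk 2 ---------------------------------------------------------------
section Chunk2

def Zm : Matrix (Fin 2) (Fin 2) ℂ := !![1, 0; 0, -1]
def Xm : Matrix (Fin 2) (Fin 2) ℂ := !![0, 1; 1, 0]
def Ym : Matrix (Fin 2) (Fin 2) ℂ := !![0, -Complex.I; Complex.I, 0]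
def E00 : Matrix (Fin 2) (Fin 2) ℂ := !![1, 0; 0, 0]

lemma Zm_unit : Zmᴴ * Zm = 1 := by
  ext i j; fin_cases i <;> fin_cases j <;>
    simp [Zm, Matrix.mul_apply, Fin.sum_univ_two, Matrix.one_apply]

lemma Xm_unit : Xmᴴ * Xm = 1 := by
  ext i j; fin_cases i <;> fin_cases j <;>
    simp [Xm, Matrix.mul_apply, Fin.sum_univ_two, Matrix.one_apply]

lemma Ym_unit : Ymᴴ * Ym = 1 := by
  ext i j; fin_cases i <;> fin_cases j <;>
    simp [Ym, Matrix.mul_apply, Fin.sum_univ_two, Matrix.one_apply]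

lemma one_unit : (1 : Matrix (Fin 2) (Fin 2) ℂ)ᴴ * 1 = 1 := by simp

lemma outer_posSemidef (w : n → ℂ) :
    Matrix.PosSemidef (Matrix.of fun i j => w i * star (w j)) := by
  refine Matrix.PosSemidef.of_dotProduct_mulVec_nonneg ?_ ?_
  · ext i j
    simp [Matrix.conjTranspose_apply, mul_comm]
  · intro x
    have key : dotProduct (star x) ((Matrix.of fun i j => w i * star (w j)) *ᵥ x)
        = star (∑ j, star (w j) * x j) * (∑ j, star (w j) * x j) := by
      simp only [dotProduct, Matrix.mulVec, dotProduct, Matrix.of_apply,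
        Pi.star_apply, star_sum, star_mul', star_star]
      rw [Finset.sum_mul]
      apply Finset.sum_congr rfl
      intro i _
      rw [Finset.mul_sum, Finset.mul_sum]
      apply Finset.sum_congr rfl
      intro j _
      ring
    rw [key]
    exact star_mul_self_nonneg _

lemma outer_trace (w : n → ℂ) (hw : ∑ i, ‖w i‖^2 = 1) :
    (Matrix.of fun i j => w i * star (w j)).trace = 1 := by
  have : (Matrix.of fun i j => w i * star (w j)).trace
      = ((∑ i, ‖w i‖^2 : ℝ) : ℂ) := by
    rw [Matrix.trace]
    push_cast
    apply Finset.sum_congr rfl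
    intro i _
    simp only [Matrix.diag_apply, Matrix.of_apply, Complex.star_def, Complex.mul_conj]
    simp [Complex.normSq_eq_norm_sq, sq]
  rw [this, hw]; simp

lemma conj_trace_one (P ρ : Matrix n n ℂ) (hP : Pᴴ * P = 1) (hρ : ρ.trace = 1) :
    (P * ρ * Pᴴ).trace = 1 := by
  rw [Matrix.trace_mul_cycle, hP, Matrix.one_mul, hρ]

lemma kron_conjTranspose (A : Matrix (Fin 2) (Fin 2) ℂ) (B : Matrix (Fin 2) (Fin 2) ℂ) :
    (A ⊗ₖ B)ᴴ = Aᴴ ⊗ₖ Bᴴ := by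
  ext i j
  simp [Matrix.conjTranspose_apply, Matrix.kroneckerMap_apply, mul_comm]

lemma kron_unit (P : Matrix (Fin 2) (Fin 2) ℂ) (hP : Pᴴ * P = 1) :
    (I2 ⊗ₖ P)ᴴ * (I2 ⊗ₖ P) = 1 := by
  rw [kron_conjTranspose, ← Matrix.mul_kronecker_mul, hP]
  simp [I2, Matrix.one_kronecker_one]

end Chunk2


-- chunk 3 ---------------------------------------------------------------
section Chunk3

lemma K0_form_pos {φ θ : ℝ} (h : Real.cos φ = Real.cos θ) :
    K0 φ θ = (Real.cos θ : ℂ) • (1 : Matrix (Fin 2) (Fin 2) ℂ) := by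
  ext i j
  fin_cases i <;> fin_cases j <;> simp [K0, h, Matrix.one_apply]

lemma K0_form_neg {φ θ : ℝ} (h : Real.cos φ = -Real.cos θ) :
    K0 φ θ = (Real.cos θ : ℂ) • Zm := by
  ext i j
  fin_cases i <;> fin_cases j <;> simp [K0, h, Zm]

lemma K1_form {φ θ : ℝ} (h : Real.sin θ = Real.sin φ) :
    K1 φ θ = (Real.sin θ : ℂ) • Xm := by
  ext i j
  fin_cases i <;> fin_cases j <;> simp [K1, h, Xm]

lemma chan_form {φ θ : ℝ} {c s : ℝ} {P Q : Matrix (Fin 2) (Fin 2) ℂ}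
    (h0 : K0 φ θ = (c : ℂ) • P) (h1 : K1 φ θ = (s : ℂ) • Q) (ρ : Matrix (Fin 2) (Fin 2) ℂ) :
    chan φ θ ρ = ((c^2 : ℝ) : ℂ) • (P * ρ * Pᴴ) + ((s^2 : ℝ) : ℂ) • (Q * ρ * Qᴴ) := by
  rw [chan, h0, h1]
  simp only [Matrix.smul_mul, Matrix.mul_smul, Matrix.conjTranspose_smul, Complex.star_def,
    Complex.conj_ofReal, smul_smul]
  push_cast
  ring_nf

lemma chanE_form {φ θ : ℝ} {c s : ℝ} {P Q : Matrix (Fin 2) (Fin 2) ℂ}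
    (h0 : K0 φ θ = (c : ℂ) • P) (h1 : K1 φ θ = (s : ℂ) • Q)
    (ρ : Matrix (Fin 2 × Fin 2) (Fin 2 × Fin 2) ℂ) :
    chanE φ θ ρ = ((c^2 : ℝ) : ℂ) • ((I2 ⊗ₖ P) * ρ * (I2 ⊗ₖ P)ᴴ)
      + ((s^2 : ℝ) : ℂ) • ((I2 ⊗ₖ Q) * ρ * (I2 ⊗ₖ Q)ᴴ) := by
  rw [chanE, h0, h1, Matrix.kronecker_smul, Matrix.kronecker_smul]
  simp only [Matrix.smul_mul, Matrix.mul_smul, Matrix.conjTranspose_smul, Complex.star_def,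
    Complex.conj_ofReal, smul_smul]
  push_cast
  ring_nf

def embed (v : EuclideanSpace ℂ (Fin 2)) : EuclideanSpace ℂ (Fin 2 × Fin 2) :=
  WithLp.toLp 2 (fun p : Fin 2 × Fin 2 => if p.1 = 0 then v p.2 else 0)

lemma embed_norm (v : EuclideanSpace ℂ (Fin 2)) (hv : ‖v‖ = 1) : ‖embed v‖ = 1 := by
  have h1 := norm_euclidean_sq (embed v)
  have h2 := norm_euclidean_sq v
  have h3 : ∑ p : Fin 2 × Fin 2, ‖embed v p‖^2 = ∑ j, ‖v j‖^2 := by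
    rw [Fintype.sum_prod_type, Fin.sum_univ_two]
    simp [embed]
  rw [h3, ← h2, hv] at h1
  nlinarith [norm_nonneg (embed v)]

lemma outer4_embed (v : EuclideanSpace ℂ (Fin 2)) :
    outer4 (embed v) = E00 ⊗ₖ outer2 v := by
  ext ⟨i, j⟩ ⟨k, l⟩
  fin_cases i <;> fin_cases k <;>
    simp [outer4, outer2, embed, E00, Matrix.kroneckerMap_apply]

lemma chanE_kron (φ θ : ℝ) (A ρ : Matrix (Fin 2) (Fin 2) ℂ) :
    chanE φ θ (A ⊗ₖ ρ) = A ⊗ₖ chan φ θ ρ := by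
  rw [chanE, chan, kron_conjTranspose, kron_conjTranspose,
    ← Matrix.mul_kronecker_mul, ← Matrix.mul_kronecker_mul,
    ← Matrix.mul_kronecker_mul, ← Matrix.mul_kronecker_mul]
  simp [I2, ← Matrix.kronecker_add]

lemma trace_reduction (S N : Matrix (Fin 2) (Fin 2) ℂ) :
    (((I2 ⊗ₖ S) : Matrix (Fin 2 × Fin 2) (Fin 2 × Fin 2) ℂ) * (E00 ⊗ₖ N)).trace
      = (S * N).trace := by
  rw [← Matrix.mul_kronecker_mul, Matrix.trace_kronecker]
  have : ((I2 * E00).trace : ℂ) = 1 := by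
    simp [I2, E00, Matrix.trace, Fin.sum_univ_two]
  rw [this, one_mul]

end Chunk3

def ve : EuclideanSpace ℂ (Fin 2) := (WithLp.equiv 2 (Fin 2 → ℂ)).symm ![1, 0]

lemma ve_norm : ‖ve‖ = 1 := by
  have h := norm_euclidean_sq ve
  have h2 : ∑ k, ‖ve k‖^2 = 1 := by
    rw [Fin.sum_univ_two]
    simp [ve]
  nlinarith [norm_nonneg ve]

lemma val_e (φ₁ θ₁ φ₂ θ₂ : ℝ) :
    ((Zm * (chan φ₁ θ₁ (outer2 ve) - chan φ₂ θ₂ (outer2 ve))).trace)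
      = ((Real.cos θ₁^2 - Real.cos θ₂^2 - Real.sin θ₁^2 + Real.sin θ₂^2 : ℝ) : ℂ) := by
  simp only [chan, K0, K1, outer2, Zm, ve, Matrix.trace, Matrix.diag_apply, Fin.sum_univ_two,
    Matrix.mul_apply, Matrix.sub_apply, Matrix.add_apply, Matrix.conjTranspose_apply,
    WithLp.equiv_symm_apply, PiLp.toLp_apply, Matrix.of_apply, Matrix.cons_val', Matrix.cons_val_zero,
    Matrix.cons_val_one, Matrix.head_cons, Matrix.head_fin_const, Matrix.empty_val',
    Matrix.cons_val_fin_one, star_one, star_zero, Complex.star_def, Complex.conj_ofReal, map_zero, _root_.map_one]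
  push_cast
  ring

def vx : EuclideanSpace ℂ (Fin 2) :=
  (WithLp.equiv 2 (Fin 2 → ℂ)).symm ![(((Real.sqrt 2)⁻¹ : ℝ) : ℂ), (((Real.sqrt 2)⁻¹ : ℝ) : ℂ)]

def vy : EuclideanSpace ℂ (Fin 2) :=
  (WithLp.equiv 2 (Fin 2 → ℂ)).symm
    ![(((Real.sqrt 2)⁻¹ : ℝ) : ℂ), (((Real.sqrt 2)⁻¹ : ℝ) : ℂ) * Complex.I]

lemma sqrt2_sq : ((Real.sqrt 2)⁻¹ : ℝ)^2 = 1/2 := by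
  rw [inv_pow, Real.sq_sqrt (by norm_num : (0:ℝ) ≤ 2)]
  norm_num

lemma sqrt2_sq_c : (((Real.sqrt 2 : ℝ) : ℂ))⁻¹ ^ 2 = 1/2 := by
  rw [inv_pow, ← Complex.ofReal_pow, Real.sq_sqrt (by norm_num : (0:ℝ) ≤ 2)]
  norm_num

lemma vx_norm : ‖vx‖ = 1 := by
  have h := norm_euclidean_sq vx
  have h2 : ∑ k, ‖vx k‖^2 = 1 := by
    rw [Fin.sum_univ_two]
    simp only [vx, WithLp.equiv_symm_apply, PiLp.toLp_apply, Matrix.cons_val_zero, Matrix.cons_val_one,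
      Matrix.head_cons, Complex.norm_real, Real.norm_eq_abs, sq_abs]
    rw [sqrt2_sq]; norm_num
  nlinarith [norm_nonneg vx]

lemma vy_norm : ‖vy‖ = 1 := by
  have h := norm_euclidean_sq vy
  have h2 : ∑ k, ‖vy k‖^2 = 1 := by
    rw [Fin.sum_univ_two]
    simp only [vy, WithLp.equiv_symm_apply, PiLp.toLp_apply, Matrix.cons_val_zero, Matrix.cons_val_one,
      Matrix.head_cons, norm_mul, Complex.norm_real, Real.norm_eq_abs, Complex.norm_I,
      mul_one, sq_abs]
    rw [sqrt2_sq]; norm_num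
  nlinarith [norm_nonneg vy]

lemma val_x (φ₁ θ₁ φ₂ θ₂ : ℝ) :
    ((Xm * (chan φ₁ θ₁ (outer2 vx) - chan φ₂ θ₂ (outer2 vx))).trace)
      = ((Real.cos θ₁ * Real.cos φ₁ + Real.sin θ₁ * Real.sin φ₁
          - Real.cos θ₂ * Real.cos φ₂ - Real.sin θ₂ * Real.sin φ₂ : ℝ) : ℂ) := by
  simp only [chan, K0, K1, outer2, Xm, vx, Matrix.trace, Matrix.diag_apply, Fin.sum_univ_two,
    Matrix.mul_apply, Matrix.sub_apply, Matrix.add_apply, Matrix.conjTranspose_apply,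
    WithLp.equiv_symm_apply, PiLp.toLp_apply, Matrix.of_apply, Matrix.cons_val', Matrix.cons_val_zero,
    Matrix.cons_val_one, Matrix.head_cons, Matrix.head_fin_const, Matrix.empty_val',
    Matrix.cons_val_fin_one, star_one, star_zero, Complex.star_def, Complex.conj_ofReal,
    map_zero, _root_.map_one]
  push_cast
  linear_combination (2 * (Complex.cos (θ₁:ℂ) * Complex.cos (φ₁:ℂ)
    + Complex.sin (θ₁:ℂ) * Complex.sin (φ₁:ℂ) - Complex.cos (θ₂:ℂ) * Complex.cos (φ₂:ℂ)
    - Complex.sin (θ₂:ℂ) * Complex.sin (φ₂:ℂ))) * sqrt2_sq_c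

lemma val_y (φ₁ θ₁ φ₂ θ₂ : ℝ) :
    ((Ym * (chan φ₁ θ₁ (outer2 vy) - chan φ₂ θ₂ (outer2 vy))).trace)
      = ((Real.cos θ₁ * Real.cos φ₁ - Real.sin θ₁ * Real.sin φ₁
          - Real.cos θ₂ * Real.cos φ₂ + Real.sin θ₂ * Real.sin φ₂ : ℝ) : ℂ) := by
  simp only [chan, K0, K1, outer2, Ym, vy, Matrix.trace, Matrix.diag_apply, Fin.sum_univ_two,
    Matrix.mul_apply, Matrix.sub_apply, Matrix.add_apply, Matrix.conjTranspose_apply,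
    WithLp.equiv_symm_apply, PiLp.toLp_apply, Matrix.of_apply, Matrix.cons_val', Matrix.cons_val_zero,
    Matrix.cons_val_one, Matrix.head_cons, Matrix.head_fin_const, Matrix.empty_val',
    Matrix.cons_val_fin_one, star_one, star_zero, Complex.star_def, Complex.conj_ofReal,
    map_zero, _root_.map_one, _root_.map_mul, Complex.conj_I, Complex.I_sq]
  push_cast
  ring_nf
  simp only [Complex.I_sq]
  ring_nf
  linear_combination (2 * (Complex.cos (θ₁:ℂ) * Complex.cos (φ₁:ℂ)
    - Complex.sin (θ₁:ℂ) * Complex.sin (φ₁:ℂ) - Complex.cos (θ₂:ℂ) * Complex.cos (φ₂:ℂ)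
    + Complex.sin (θ₂:ℂ) * Complex.sin (φ₂:ℂ))) * sqrt2_sq_c

-- chunk 4: generic bound lemmas ------------------------------------------

lemma outer2_posSemidef (v : EuclideanSpace ℂ (Fin 2)) : (outer2 v).PosSemidef :=
  outer_posSemidef v

lemma outer4_posSemidef (w : EuclideanSpace ℂ (Fin 2 × Fin 2)) : (outer4 w).PosSemidef :=
  outer_posSemidef w

lemma outer2_trace (v : EuclideanSpace ℂ (Fin 2)) (hv : ‖v‖ = 1) : (outer2 v).trace = 1 := by
  apply outer_trace
  have := norm_euclidean_sq v
  rw [hv] at this; nlinarith [this]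

lemma outer4_trace (w : EuclideanSpace ℂ (Fin 2 × Fin 2)) (hw : ‖w‖ = 1) :
    (outer4 w).trace = 1 := by
  apply outer_trace
  have := norm_euclidean_sq w
  rw [hw] at this; nlinarith [this]

lemma chan_isHermitian (φ θ : ℝ) {ρ : Matrix (Fin 2) (Fin 2) ℂ} (hρ : ρ.IsHermitian) :
    (chan φ θ ρ).IsHermitian :=
  (Matrix.isHermitian_mul_mul_conjTranspose _ hρ).add
    (Matrix.isHermitian_mul_mul_conjTranspose _ hρ)

lemma chanE_isHermitian (φ θ : ℝ) {ρ : Matrix (Fin 2 × Fin 2) (Fin 2 × Fin 2) ℂ}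
    (hρ : ρ.IsHermitian) : (chanE φ θ ρ).IsHermitian :=
  (Matrix.isHermitian_mul_mul_conjTranspose _ hρ).add
    (Matrix.isHermitian_mul_mul_conjTranspose _ hρ)

lemma M2_isHermitian (φ₁ θ₁ φ₂ θ₂ : ℝ) (v : EuclideanSpace ℂ (Fin 2)) :
    (chan φ₁ θ₁ (outer2 v) - chan φ₂ θ₂ (outer2 v)).IsHermitian :=
  (chan_isHermitian _ _ (outer2_posSemidef v).1).sub (chan_isHermitian _ _ (outer2_posSemidef v).1)

/-- lower bound for `S1`-type quantities -/
lemma lb1 (φ₁ θ₁ φ₂ θ₂ : ℝ) (S : Matrix (Fin 2) (Fin 2) ℂ) (hSU : Sᴴ * S = 1)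
    (v : EuclideanSpace ℂ (Fin 2)) :
    |((S * (chan φ₁ θ₁ (outer2 v) - chan φ₂ θ₂ (outer2 v))).trace).re|
      ≤ traceNorm (chan φ₁ θ₁ (outer2 v) - chan φ₂ θ₂ (outer2 v)) :=
  re_trace_le_traceNorm _ _ (M2_isHermitian _ _ _ _ v) hSU

lemma E00_herm : E00ᴴ = E00 := by
  ext i j; fin_cases i <;> fin_cases j <;> simp [E00]

/-- lower bound for `S2`-type quantities via the embedded vector -/
lemma lb2 (φ₁ θ₁ φ₂ θ₂ : ℝ) (S : Matrix (Fin 2) (Fin 2) ℂ) (hSU : Sᴴ * S = 1)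
    (v : EuclideanSpace ℂ (Fin 2)) :
    |((S * (chan φ₁ θ₁ (outer2 v) - chan φ₂ θ₂ (outer2 v))).trace).re|
      ≤ traceNorm (chanE φ₁ θ₁ (outer4 (embed v)) - chanE φ₂ θ₂ (outer4 (embed v))) := by
  have hkey : chanE φ₁ θ₁ (outer4 (embed v)) - chanE φ₂ θ₂ (outer4 (embed v))
      = E00 ⊗ₖ (chan φ₁ θ₁ (outer2 v) - chan φ₂ θ₂ (outer2 v)) := by
    rw [outer4_embed, chanE_kron, chanE_kron]
    ext i j
    simp [Matrix.kroneckerMap_apply, Matrix.sub_apply, mul_sub]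
  rw [hkey]
  have hherm : (E00 ⊗ₖ (chan φ₁ θ₁ (outer2 v) - chan φ₂ θ₂ (outer2 v))).IsHermitian := by
    unfold Matrix.IsHermitian
    rw [kron_conjTranspose, E00_herm, (M2_isHermitian φ₁ θ₁ φ₂ θ₂ v)]
  have := re_trace_le_traceNorm (E00 ⊗ₖ (chan φ₁ θ₁ (outer2 v) - chan φ₂ θ₂ (outer2 v)))
    (I2 ⊗ₖ S) hherm (kron_unit S hSU)
  rwa [trace_reduction] at this

/-- upper bound, same-sign case shape -/
lemma ub_two {n : Type*} [Fintype n] [DecidableEq n] (M ρ P Q : Matrix n n ℂ)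
    (hρ : ρ.PosSemidef) (hρt : ρ.trace = 1) (hP : Pᴴ * P = 1) (hQ : Qᴴ * Q = 1)
    (d g : ℝ) (hM : M = ((d : ℝ) : ℂ) • (P * ρ * Pᴴ) + ((g : ℝ) : ℂ) • (Q * ρ * Qᴴ)) :
    traceNorm M ≤ |d| + |g| := by
  have := traceNorm_le_of_decomp M (P * ρ * Pᴴ) (Q * ρ * Qᴴ) (P * ρ * Pᴴ) d g 0
    (hρ.mul_mul_conjTranspose_same P) (hρ.mul_mul_conjTranspose_same Q)
    (hρ.mul_mul_conjTranspose_same P)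
    (conj_trace_one P ρ hP hρt) (conj_trace_one Q ρ hQ hρt) (conj_trace_one P ρ hP hρt)
    (by rw [hM]; push_cast; simp)
  simpa using this

/-- upper bound, mixed-sign case shape -/
lemma ub_three {n : Type*} [Fintype n] [DecidableEq n] (M ρ P₁ P₂ Q : Matrix n n ℂ)
    (hρ : ρ.PosSemidef) (hρt : ρ.trace = 1) (hP₁ : P₁ᴴ * P₁ = 1) (hP₂ : P₂ᴴ * P₂ = 1)
    (hQ : Qᴴ * Q = 1) (a₁ a₂ g : ℝ)
    (hM : M = ((a₁ : ℝ) : ℂ) • (P₁ * ρ * P₁ᴴ) - ((a₂ : ℝ) : ℂ) • (P₂ * ρ * P₂ᴴ)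
      + ((g : ℝ) : ℂ) • (Q * ρ * Qᴴ)) :
    traceNorm M ≤ |a₁| + |a₂| + |g| := by
  have := traceNorm_le_of_decomp M (P₁ * ρ * P₁ᴴ) (P₂ * ρ * P₂ᴴ) (Q * ρ * Qᴴ) a₁ (-a₂) g
    (hρ.mul_mul_conjTranspose_same P₁) (hρ.mul_mul_conjTranspose_same P₂)
    (hρ.mul_mul_conjTranspose_same Q)
    (conj_trace_one P₁ ρ hP₁ hρt) (conj_trace_one P₂ ρ hP₂ hρt) (conj_trace_one Q ρ hQ hρt)
    (by rw [hM]; push_cast; module)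
  rwa [abs_neg] at this

-- chunk 6 -----------------------------------------------------------------

lemma ub1_same (φ₁ θ₁ φ₂ θ₂ : ℝ) (P : Matrix (Fin 2) (Fin 2) ℂ) (hP : Pᴴ * P = 1)
    (h01 : K0 φ₁ θ₁ = (Real.cos θ₁ : ℂ) • P) (h11 : K1 φ₁ θ₁ = (Real.sin θ₁ : ℂ) • Xm)
    (h02 : K0 φ₂ θ₂ = (Real.cos θ₂ : ℂ) • P) (h12 : K1 φ₂ θ₂ = (Real.sin θ₂ : ℂ) • Xm)
    (v : EuclideanSpace ℂ (Fin 2)) (hv : ‖v‖ = 1) :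
    traceNorm (chan φ₁ θ₁ (outer2 v) - chan φ₂ θ₂ (outer2 v))
      ≤ |Real.cos θ₁^2 - Real.cos θ₂^2| + |Real.sin θ₁^2 - Real.sin θ₂^2| :=
  ub_two _ (outer2 v) P Xm (outer2_posSemidef v) (outer2_trace v hv) hP Xm_unit
    (Real.cos θ₁^2 - Real.cos θ₂^2) (Real.sin θ₁^2 - Real.sin θ₂^2)
    (by rw [chan_form h01 h11, chan_form h02 h12]; push_cast; module)

lemma ub2_same (φ₁ θ₁ φ₂ θ₂ : ℝ) (P : Matrix (Fin 2) (Fin 2) ℂ) (hP : Pᴴ * P = 1)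
    (h01 : K0 φ₁ θ₁ = (Real.cos θ₁ : ℂ) • P) (h11 : K1 φ₁ θ₁ = (Real.sin θ₁ : ℂ) • Xm)
    (h02 : K0 φ₂ θ₂ = (Real.cos θ₂ : ℂ) • P) (h12 : K1 φ₂ θ₂ = (Real.sin θ₂ : ℂ) • Xm)
    (w : EuclideanSpace ℂ (Fin 2 × Fin 2)) (hw : ‖w‖ = 1) :
    traceNorm (chanE φ₁ θ₁ (outer4 w) - chanE φ₂ θ₂ (outer4 w))
      ≤ |Real.cos θ₁^2 - Real.cos θ₂^2| + |Real.sin θ₁^2 - Real.sin θ₂^2| :=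
  ub_two _ (outer4 w) (I2 ⊗ₖ P) (I2 ⊗ₖ Xm) (outer4_posSemidef w) (outer4_trace w hw)
    (kron_unit P hP) (kron_unit Xm Xm_unit)
    (Real.cos θ₁^2 - Real.cos θ₂^2) (Real.sin θ₁^2 - Real.sin θ₂^2)
    (by rw [chanE_form h01 h11, chanE_form h02 h12]; push_cast; module)

lemma ub1_mixed (φ₁ θ₁ φ₂ θ₂ : ℝ) (P₁ P₂ : Matrix (Fin 2) (Fin 2) ℂ)
    (hP₁ : P₁ᴴ * P₁ = 1) (hP₂ : P₂ᴴ * P₂ = 1)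
    (h01 : K0 φ₁ θ₁ = (Real.cos θ₁ : ℂ) • P₁) (h11 : K1 φ₁ θ₁ = (Real.sin θ₁ : ℂ) • Xm)
    (h02 : K0 φ₂ θ₂ = (Real.cos θ₂ : ℂ) • P₂) (h12 : K1 φ₂ θ₂ = (Real.sin θ₂ : ℂ) • Xm)
    (v : EuclideanSpace ℂ (Fin 2)) (hv : ‖v‖ = 1) :
    traceNorm (chan φ₁ θ₁ (outer2 v) - chan φ₂ θ₂ (outer2 v))
      ≤ Real.cos θ₁^2 + Real.cos θ₂^2 + |Real.sin θ₁^2 - Real.sin θ₂^2| := by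
  have := ub_three (chan φ₁ θ₁ (outer2 v) - chan φ₂ θ₂ (outer2 v)) (outer2 v) P₁ P₂ Xm (outer2_posSemidef v) (outer2_trace v hv) hP₁ hP₂
    Xm_unit (Real.cos θ₁^2) (Real.cos θ₂^2) (Real.sin θ₁^2 - Real.sin θ₂^2)
    (by rw [chan_form h01 h11, chan_form h02 h12]; push_cast; module)
  rwa [abs_of_nonneg (sq_nonneg _), abs_of_nonneg (sq_nonneg _)] at this

lemma ub2_mixed (φ₁ θ₁ φ₂ θ₂ : ℝ) (P₁ P₂ : Matrix (Fin 2) (Fin 2) ℂ)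
    (hP₁ : P₁ᴴ * P₁ = 1) (hP₂ : P₂ᴴ * P₂ = 1)
    (h01 : K0 φ₁ θ₁ = (Real.cos θ₁ : ℂ) • P₁) (h11 : K1 φ₁ θ₁ = (Real.sin θ₁ : ℂ) • Xm)
    (h02 : K0 φ₂ θ₂ = (Real.cos θ₂ : ℂ) • P₂) (h12 : K1 φ₂ θ₂ = (Real.sin θ₂ : ℂ) • Xm)
    (w : EuclideanSpace ℂ (Fin 2 × Fin 2)) (hw : ‖w‖ = 1) :
    traceNorm (chanE φ₁ θ₁ (outer4 w) - chanE φ₂ θ₂ (outer4 w))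
      ≤ Real.cos θ₁^2 + Real.cos θ₂^2 + |Real.sin θ₁^2 - Real.sin θ₂^2| := by
  have := ub_three (chanE φ₁ θ₁ (outer4 w) - chanE φ₂ θ₂ (outer4 w)) (outer4 w) (I2 ⊗ₖ P₁) (I2 ⊗ₖ P₂) (I2 ⊗ₖ Xm) (outer4_posSemidef w)
    (outer4_trace w hw) (kron_unit P₁ hP₁) (kron_unit P₂ hP₂) (kron_unit Xm Xm_unit)
    (Real.cos θ₁^2) (Real.cos θ₂^2) (Real.sin θ₁^2 - Real.sin θ₂^2)
    (by rw [chanE_form h01 h11, chanE_form h02 h12]; push_cast; module)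
  rwa [abs_of_nonneg (sq_nonneg _), abs_of_nonneg (sq_nonneg _)] at this

lemma S_eq_T (φ₁ θ₁ φ₂ θ₂ T : ℝ)
    (hub1 : ∀ v : EuclideanSpace ℂ (Fin 2), ‖v‖ = 1 →
      traceNorm (chan φ₁ θ₁ (outer2 v) - chan φ₂ θ₂ (outer2 v)) ≤ T)
    (hub2 : ∀ w : EuclideanSpace ℂ (Fin 2 × Fin 2), ‖w‖ = 1 →
      traceNorm (chanE φ₁ θ₁ (outer4 w) - chanE φ₂ θ₂ (outer4 w)) ≤ T)
    (S : Matrix (Fin 2) (Fin 2) ℂ) (hSU : Sᴴ * S = 1)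
    (v : EuclideanSpace ℂ (Fin 2)) (hv : ‖v‖ = 1)
    (hval : T ≤ |((S * (chan φ₁ θ₁ (outer2 v) - chan φ₂ θ₂ (outer2 v))).trace).re|) :
    S2 φ₁ θ₁ φ₂ θ₂ = S1 φ₁ θ₁ φ₂ θ₂ := by
  have ne1 : Nonempty {v : EuclideanSpace ℂ (Fin 2) // ‖v‖ = 1} := ⟨⟨ve, ve_norm⟩⟩
  have ne2 : Nonempty {w : EuclideanSpace ℂ (Fin 2 × Fin 2) // ‖w‖ = 1} :=
    ⟨⟨embed ve, embed_norm ve ve_norm⟩⟩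
  have bdd1 : BddAbove (Set.range fun v : {v : EuclideanSpace ℂ (Fin 2) // ‖v‖ = 1} =>
      traceNorm (chan φ₁ θ₁ (outer2 v.1) - chan φ₂ θ₂ (outer2 v.1))) := by
    refine ⟨T, ?_⟩
    rintro x ⟨u, rfl⟩
    exact hub1 u.1 u.2
  have bdd2 : BddAbove (Set.range fun w : {w : EuclideanSpace ℂ (Fin 2 × Fin 2) // ‖w‖ = 1} =>
      traceNorm (chanE φ₁ θ₁ (outer4 w.1) - chanE φ₂ θ₂ (outer4 w.1))) := by
    refine ⟨T, ?_⟩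
    rintro x ⟨u, rfl⟩
    exact hub2 u.1 u.2
  have hlow1 : T ≤ traceNorm (chan φ₁ θ₁ (outer2 v) - chan φ₂ θ₂ (outer2 v)) :=
    hval.trans (lb1 φ₁ θ₁ φ₂ θ₂ S hSU v)
  have hlow2 : T ≤ traceNorm (chanE φ₁ θ₁ (outer4 (embed v)) - chanE φ₂ θ₂ (outer4 (embed v))) :=
    hval.trans (lb2 φ₁ θ₁ φ₂ θ₂ S hSU v)
  have hS1 : S1 φ₁ θ₁ φ₂ θ₂ = T := by
    refine le_antisymm (ciSup_le fun u => hub1 u.1 u.2) ?_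
    exact hlow1.trans (le_ciSup bdd1 ⟨v, hv⟩)
  have hS2 : S2 φ₁ θ₁ φ₂ θ₂ = T := by
    refine le_antisymm (ciSup_le fun u => hub2 u.1 u.2) ?_
    exact hlow2.trans (le_ciSup bdd2 ⟨embed v, embed_norm v hv⟩)
  rw [hS1, hS2]

theorem quasi_extreme_no_side_entanglement
    (θ₁ φ₁ θ₂ φ₂ : ℝ)
    (hθ₁ : θ₁ ∈ Set.Icc 0 Real.pi) (hφ₁ : φ₁ ∈ Set.Icc 0 Real.pi)
    (hθ₂ : θ₂ ∈ Set.Icc 0 Real.pi) (hφ₂ : φ₂ ∈ Set.Icc 0 Real.pi)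
    (h1 : Real.sin θ₁ = Real.sin φ₁) (h2 : Real.sin θ₂ = Real.sin φ₂) :
    S2 φ₁ θ₁ φ₂ θ₂ = S1 φ₁ θ₁ φ₂ θ₂ := by
  have e1 : Real.sin θ₁^2 = 1 - Real.cos θ₁^2 := Real.sin_sq θ₁
  have e2 : Real.sin θ₂^2 = 1 - Real.cos θ₂^2 := Real.sin_sq θ₂
  have hsq₁ : Real.cos φ₁^2 = Real.cos θ₁^2 := by
    have ha := Real.sin_sq_add_cos_sq θ₁
    have hb := Real.sin_sq_add_cos_sq φ₁
    rw [← h1] at hb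
    linarith
  have hsq₂ : Real.cos φ₂^2 = Real.cos θ₂^2 := by
    have ha := Real.sin_sq_add_cos_sq θ₂
    have hb := Real.sin_sq_add_cos_sq φ₂
    rw [← h2] at hb
    linarith
  have hc₁ : Real.cos φ₁ = Real.cos θ₁ ∨ Real.cos φ₁ = -Real.cos θ₁ :=
    sq_eq_sq_iff_eq_or_eq_neg.mp hsq₁
  have hc₂ : Real.cos φ₂ = Real.cos θ₂ ∨ Real.cos φ₂ = -Real.cos θ₂ :=
    sq_eq_sq_iff_eq_or_eq_neg.mp hsq₂
  rcases hc₁ with hc₁ | hc₁ <;> rcases hc₂ with hc₂ | hc₂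
  · -- (+,+)
    refine S_eq_T φ₁ θ₁ φ₂ θ₂
      (|Real.cos θ₁^2 - Real.cos θ₂^2| + |Real.sin θ₁^2 - Real.sin θ₂^2|)
      (fun v hv => ub1_same φ₁ θ₁ φ₂ θ₂ 1 one_unit (K0_form_pos hc₁) (K1_form h1)
        (K0_form_pos hc₂) (K1_form h2) v hv)
      (fun w hw => ub2_same φ₁ θ₁ φ₂ θ₂ 1 one_unit (K0_form_pos hc₁) (K1_form h1)
        (K0_form_pos hc₂) (K1_form h2) w hw)
      Zm Zm_unit ve ve_norm ?_
    rw [val_e φ₁ θ₁ φ₂ θ₂, Complex.ofReal_re]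
    rw [show Real.cos θ₁^2 - Real.cos θ₂^2 - Real.sin θ₁^2 + Real.sin θ₂^2
        = 2*(Real.cos θ₁^2 - Real.cos θ₂^2) from by rw [e1, e2]; ring,
      show Real.sin θ₁^2 - Real.sin θ₂^2 = -(Real.cos θ₁^2 - Real.cos θ₂^2) from by
        rw [e1, e2]; ring,
      abs_neg, abs_mul, abs_two]
    linarith
  · -- (+,-)
    rcases le_total (Real.cos θ₁^2) (Real.cos θ₂^2) with hcc | hcc
    · refine S_eq_T φ₁ θ₁ φ₂ θ₂
        (Real.cos θ₁^2 + Real.cos θ₂^2 + |Real.sin θ₁^2 - Real.sin θ₂^2|)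
        (fun v hv => ub1_mixed φ₁ θ₁ φ₂ θ₂ 1 Zm one_unit Zm_unit (K0_form_pos hc₁)
          (K1_form h1) (K0_form_neg hc₂) (K1_form h2) v hv)
        (fun w hw => ub2_mixed φ₁ θ₁ φ₂ θ₂ 1 Zm one_unit Zm_unit (K0_form_pos hc₁)
          (K1_form h1) (K0_form_neg hc₂) (K1_form h2) w hw)
        Xm Xm_unit vx vx_norm ?_
      rw [val_x φ₁ θ₁ φ₂ θ₂, Complex.ofReal_re, hc₁, hc₂, ← h1, ← h2]
      rw [show Real.sin θ₁^2 - Real.sin θ₂^2 = Real.cos θ₂^2 - Real.cos θ₁^2 from by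
        rw [e1, e2]; ring, abs_of_nonneg (by linarith)]
      refine le_trans ?_ (le_abs_self _)
      ring_nf
      linarith [e1, e2]
    · refine S_eq_T φ₁ θ₁ φ₂ θ₂
        (Real.cos θ₁^2 + Real.cos θ₂^2 + |Real.sin θ₁^2 - Real.sin θ₂^2|)
        (fun v hv => ub1_mixed φ₁ θ₁ φ₂ θ₂ 1 Zm one_unit Zm_unit (K0_form_pos hc₁)
          (K1_form h1) (K0_form_neg hc₂) (K1_form h2) v hv)
        (fun w hw => ub2_mixed φ₁ θ₁ φ₂ θ₂ 1 Zm one_unit Zm_unit (K0_form_pos hc₁)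
          (K1_form h1) (K0_form_neg hc₂) (K1_form h2) w hw)
        Ym Ym_unit vy vy_norm ?_
      rw [val_y φ₁ θ₁ φ₂ θ₂, Complex.ofReal_re, hc₁, hc₂, ← h1, ← h2]
      rw [show Real.sin θ₁^2 - Real.sin θ₂^2 = Real.cos θ₂^2 - Real.cos θ₁^2 from by
        rw [e1, e2]; ring, abs_of_nonpos (by linarith)]
      refine le_trans ?_ (le_abs_self _)
      ring_nf
      linarith [e1, e2]
  · -- (-,+)
    rcases le_total (Real.cos θ₁^2) (Real.cos θ₂^2) with hcc | hcc
    · refine S_eq_T φ₁ θ₁ φ₂ θ₂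
        (Real.cos θ₁^2 + Real.cos θ₂^2 + |Real.sin θ₁^2 - Real.sin θ₂^2|)
        (fun v hv => ub1_mixed φ₁ θ₁ φ₂ θ₂ Zm 1 Zm_unit one_unit (K0_form_neg hc₁)
          (K1_form h1) (K0_form_pos hc₂) (K1_form h2) v hv)
        (fun w hw => ub2_mixed φ₁ θ₁ φ₂ θ₂ Zm 1 Zm_unit one_unit (K0_form_neg hc₁)
          (K1_form h1) (K0_form_pos hc₂) (K1_form h2) w hw)
        Ym Ym_unit vy vy_norm ?_
      rw [val_y φ₁ θ₁ φ₂ θ₂, Complex.ofReal_re, hc₁, hc₂, ← h1, ← h2]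
      rw [show Real.sin θ₁^2 - Real.sin θ₂^2 = Real.cos θ₂^2 - Real.cos θ₁^2 from by
        rw [e1, e2]; ring, abs_of_nonneg (by linarith)]
      refine le_trans ?_ (neg_le_abs _)
      ring_nf
      linarith [e1, e2]
    · refine S_eq_T φ₁ θ₁ φ₂ θ₂
        (Real.cos θ₁^2 + Real.cos θ₂^2 + |Real.sin θ₁^2 - Real.sin θ₂^2|)
        (fun v hv => ub1_mixed φ₁ θ₁ φ₂ θ₂ Zm 1 Zm_unit one_unit (K0_form_neg hc₁)
          (K1_form h1) (K0_form_pos hc₂) (K1_form h2) v hv)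
        (fun w hw => ub2_mixed φ₁ θ₁ φ₂ θ₂ Zm 1 Zm_unit one_unit (K0_form_neg hc₁)
          (K1_form h1) (K0_form_pos hc₂) (K1_form h2) w hw)
        Xm Xm_unit vx vx_norm ?_
      rw [val_x φ₁ θ₁ φ₂ θ₂, Complex.ofReal_re, hc₁, hc₂, ← h1, ← h2]
      rw [show Real.sin θ₁^2 - Real.sin θ₂^2 = Real.cos θ₂^2 - Real.cos θ₁^2 from by
        rw [e1, e2]; ring, abs_of_nonpos (by linarith)]
      refine le_trans ?_ (neg_le_abs _)
      ring_nf
      linarith [e1, e2]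
  · -- (-,-)
    refine S_eq_T φ₁ θ₁ φ₂ θ₂
      (|Real.cos θ₁^2 - Real.cos θ₂^2| + |Real.sin θ₁^2 - Real.sin θ₂^2|)
      (fun v hv => ub1_same φ₁ θ₁ φ₂ θ₂ Zm Zm_unit (K0_form_neg hc₁) (K1_form h1)
        (K0_form_neg hc₂) (K1_form h2) v hv)
      (fun w hw => ub2_same φ₁ θ₁ φ₂ θ₂ Zm Zm_unit (K0_form_neg hc₁) (K1_form h1)
        (K0_form_neg hc₂) (K1_form h2) w hw)
      Zm Zm_unit ve ve_norm ?_
    rw [val_e φ₁ θ₁ φ₂ θ₂, Complex.ofReal_re]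
    rw [show Real.cos θ₁^2 - Real.cos θ₂^2 - Real.sin θ₁^2 + Real.sin θ₂^2
        = 2*(Real.cos θ₁^2 - Real.cos θ₂^2) from by rw [e1, e2]; ring,
      show Real.sin θ₁^2 - Real.sin θ₂^2 = -(Real.cos θ₁^2 - Real.cos θ₂^2) from by
        rw [e1, e2]; ring,
      abs_neg, abs_mul, abs_two]
    linarith
end
end

section
/- The optimal single-qubit distinguishability of the two extremal channels reduces to a one-parameter optimization: S₁ = max_{s ∈ [0,1]} 2·√( ((1−s)α + sβ)² + 4s(1−s)·( ((|γ₁|+|γ₂|)/2)² − αβ ) ). -/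
open Matrix
open scoped Kronecker

noncomputable section

lemma traceNorm_special (a : ℝ) (b : ℂ) :
    traceNorm !![(a:ℂ), b; (starRingEnd ℂ) b, (-a:ℂ)] = 2 * Real.sqrt (a^2 + Complex.normSq b) := by
  set M : Matrix (Fin 2) (Fin 2) ℂ := !![(a:ℂ), b; (starRingEnd ℂ) b, (-a:ℂ)] with hMdef
  have hM : M.IsHermitian := by
    ext i j
    fin_cases i <;> fin_cases j <;>
      simp [M, Matrix.conjTranspose_apply, Complex.ext_iff]
  rw [traceNorm, dif_pos hM]
  have htr : M.trace = ∑ i, (hM.eigenvalues i : ℂ) := by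
    conv_lhs => rw [hM.spectral_theorem]
    rw [Unitary.conjStarAlgAut_apply, Matrix.trace_mul_cycle]
    rw [Unitary.coe_star_mul_self]
    simp [Matrix.trace_diagonal]
  have htr0 : M.trace = 0 := by
    simp [Matrix.trace, Fin.sum_univ_two, M]
  have hdet : M.det = ∏ i, (hM.eigenvalues i : ℂ) := hM.det_eq_prod_eigenvalues
  have hdet2 : M.det = -((a:ℂ)^2 + (Complex.normSq b : ℂ)) := by
    rw [hMdef, Matrix.det_fin_two_of]
    rw [mul_comm b]
    rw [← Complex.normSq_eq_conj_mul_self]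
    ring
  set l0 := hM.eigenvalues 0
  set l1 := hM.eigenvalues 1
  have hs : l0 + l1 = 0 := by
    have : ((l0 + l1 : ℝ) : ℂ) = 0 := by
      push_cast
      rw [← Fin.sum_univ_two (fun i => (hM.eigenvalues i : ℂ)), ← htr, htr0]
    exact_mod_cast this
  have hp : l0 * l1 = -(a^2 + Complex.normSq b) := by
    have : ((l0 * l1 : ℝ) : ℂ) = -((a:ℂ)^2 + (Complex.normSq b : ℂ)) := by
      push_cast
      rw [← hdet2, hdet, Fin.prod_univ_two]
    exact_mod_cast this
  have h1 : l1 = -l0 := by linarith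
  have hsq : l0^2 = a^2 + Complex.normSq b := by
    rw [h1] at hp; linear_combination (-1 : ℝ) * hp
  rw [Fin.sum_univ_two]
  show |l0| + |l1| = _
  rw [h1, abs_neg, ← two_mul]
  rw [← hsq, Real.sqrt_sq_eq_abs]

lemma chan_diff_eq (θ₁ φ₁ θ₂ φ₂ a : ℝ) (b : ℂ) (v : EuclideanSpace ℂ (Fin 2))
    (ha : a = Complex.normSq (v 0) * (Real.cos θ₁^2 - Real.cos θ₂^2)
        - Complex.normSq (v 1) * (Real.cos φ₁^2 - Real.cos φ₂^2))
    (hb : b = ((Real.cos φ₁ * Real.cos θ₁ - Real.cos φ₂ * Real.cos θ₂ : ℝ) : ℂ)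
          * (v 0 * (starRingEnd ℂ) (v 1))
        + ((Real.sin φ₁ * Real.sin θ₁ - Real.sin φ₂ * Real.sin θ₂ : ℝ) : ℂ)
          * ((starRingEnd ℂ) (v 0) * v 1)) :
    chan φ₁ θ₁ (outer2 v) - chan φ₂ θ₂ (outer2 v) = !![(a:ℂ), b; (starRingEnd ℂ) b, (-a:ℂ)] := by
  have h1 : ∀ x : ℝ, (Real.sin x : ℂ)^2 + (Real.cos x : ℂ)^2 = 1 := by
    intro x
    exact_mod_cast congrArg (fun t : ℝ => (t : ℂ)) (Real.sin_sq_add_cos_sq x)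
  have hn0 : v 0 * (starRingEnd ℂ) (v 0) = (Complex.normSq (v 0) : ℂ) := Complex.mul_conj _
  have hn1 : v 1 * (starRingEnd ℂ) (v 1) = (Complex.normSq (v 1) : ℂ) := Complex.mul_conj _
  subst ha hb
  rw [← Matrix.ext_iff]
  simp only [Fin.forall_fin_two]
  simp only [chan, outer2, K0, K1, Matrix.sub_apply, Matrix.add_apply, Matrix.mul_apply,
    Fin.sum_univ_two, Matrix.conjTranspose_apply, Matrix.cons_val', Matrix.cons_val_zero,
    Matrix.cons_val_one, Matrix.head_cons, Matrix.empty_val', Matrix.cons_val_fin_one,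
    Matrix.head_fin_const, Matrix.of_apply, map_zero, star_zero, Complex.star_def,
    Complex.conj_ofReal, mul_zero, zero_mul,
    add_zero, zero_add, map_add, map_sub, _root_.map_mul, Complex.conj_conj, Complex.ofReal_mul,
    Complex.ofReal_sub]
  refine ⟨⟨?_, ?_⟩, ?_, ?_⟩
  · push_cast [-Complex.ofReal_cos, -Complex.ofReal_sin]
    linear_combination ((Real.cos θ₁:ℂ)^2 - (Real.cos θ₂:ℂ)^2) * hn0
      + ((Real.sin φ₁:ℂ)^2 - (Real.sin φ₂:ℂ)^2) * hn1
      + (Complex.normSq (v 1) : ℂ) * (h1 φ₁ - h1 φ₂)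
  · ring
  · ring
  · push_cast [-Complex.ofReal_cos, -Complex.ofReal_sin]
    linear_combination ((Real.cos φ₁:ℂ)^2 - (Real.cos φ₂:ℂ)^2) * hn1
      + ((Real.sin θ₁:ℂ)^2 - (Real.sin θ₂:ℂ)^2) * hn0
      + (Complex.normSq (v 0) : ℂ) * (h1 θ₁ - h1 θ₂)

set_option maxHeartbeats 1000000 in
theorem S1_one_parameter_optimization
    (θ₁ φ₁ θ₂ φ₂ : ℝ)
    (hθ₁ : θ₁ ∈ Set.Icc 0 Real.pi) (hφ₁ : φ₁ ∈ Set.Icc 0 Real.pi)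
    (hθ₂ : θ₂ ∈ Set.Icc 0 Real.pi) (hφ₂ : φ₂ ∈ Set.Icc 0 Real.pi)
    (α β γ₁ γ₂ : ℝ)
    (hα : α = Real.cos θ₁ ^ 2 - Real.cos θ₂ ^ 2)
    (hβ : β = Real.cos φ₁ ^ 2 - Real.cos φ₂ ^ 2)
    (hγ₁ : γ₁ = Real.cos φ₁ * Real.cos θ₁ - Real.cos φ₂ * Real.cos θ₂)
    (hγ₂ : γ₂ = Real.sin φ₁ * Real.sin θ₁ - Real.sin φ₂ * Real.sin θ₂) :
    S1 φ₁ θ₁ φ₂ θ₂ =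
      ⨆ s : Set.Icc (0 : ℝ) 1,
        2 * Real.sqrt (((1 - (s : ℝ)) * α + (s : ℝ) * β) ^ 2 +
          4 * (s : ℝ) * (1 - (s : ℝ)) * (((|γ₁| + |γ₂|) / 2) ^ 2 - α * β)) := by
  classical
  set K : ℝ := |γ₁| + |γ₂| with hK
  -- inner algebraic identity
  have hinner : ∀ s : ℝ, ((1 - s) * α + s * β) ^ 2 + 4 * s * (1 - s) * ((K / 2) ^ 2 - α * β)
      = ((1 - s) * α - s * β) ^ 2 + s * (1 - s) * K ^ 2 := by
    intro s; ring
  -- the one-parameter objective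
  set G : ℝ → ℝ := fun s => 2 * Real.sqrt (((1 - s) * α - s * β) ^ 2 + s * (1 - s) * K ^ 2)
    with hG
  -- norms of unit vectors
  have hsum : ∀ v : EuclideanSpace ℂ (Fin 2), ‖v‖ = 1 →
      Complex.normSq (v 0) + Complex.normSq (v 1) = 1 := by
    intro v hv
    have h : ∑ i, ‖v i‖ ^ 2 = 1 := by
      rw [EuclideanSpace.norm_eq, Real.sqrt_eq_one] at hv
      exact hv
    simpa [Fin.sum_univ_two, Complex.sq_norm] using h
  -- the key trace-norm formula for any unit vector
  have key : ∀ v : EuclideanSpace ℂ (Fin 2), ‖v‖ = 1 →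
      traceNorm (chan φ₁ θ₁ (outer2 v) - chan φ₂ θ₂ (outer2 v)) =
        2 * Real.sqrt (((1 - Complex.normSq (v 1)) * α - Complex.normSq (v 1) * β) ^ 2 +
          Complex.normSq ((γ₁ : ℂ) * (v 0 * (starRingEnd ℂ) (v 1))
            + (γ₂ : ℂ) * ((starRingEnd ℂ) (v 0) * v 1))) := by
    intro v hv
    have hn := hsum v hv
    have ha : (1 - Complex.normSq (v 1)) * α - Complex.normSq (v 1) * β
        = Complex.normSq (v 0) * (Real.cos θ₁^2 - Real.cos θ₂^2)
          - Complex.normSq (v 1) * (Real.cos φ₁^2 - Real.cos φ₂^2) := by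
      rw [hα, hβ]; nlinarith [hn]
    have hb : ((γ₁ : ℂ) * (v 0 * (starRingEnd ℂ) (v 1))
            + (γ₂ : ℂ) * ((starRingEnd ℂ) (v 0) * v 1))
        = ((Real.cos φ₁ * Real.cos θ₁ - Real.cos φ₂ * Real.cos θ₂ : ℝ) : ℂ)
            * (v 0 * (starRingEnd ℂ) (v 1))
          + ((Real.sin φ₁ * Real.sin θ₁ - Real.sin φ₂ * Real.sin θ₂ : ℝ) : ℂ)
            * ((starRingEnd ℂ) (v 0) * v 1) := by
      rw [hγ₁, hγ₂]
    rw [chan_diff_eq θ₁ φ₁ θ₂ φ₂ _ _ v ha hb, traceNorm_special]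
  -- bound on the off-diagonal term
  have hbv : ∀ v : EuclideanSpace ℂ (Fin 2),
      Complex.normSq ((γ₁ : ℂ) * (v 0 * (starRingEnd ℂ) (v 1))
          + (γ₂ : ℂ) * ((starRingEnd ℂ) (v 0) * v 1))
        ≤ Complex.normSq (v 1) * Complex.normSq (v 0) * K ^ 2 := by
    intro v
    set c : ℂ := v 0 * (starRingEnd ℂ) (v 1) with hc
    have hcc : (starRingEnd ℂ) (v 0) * v 1 = (starRingEnd ℂ) c := by
      simp [hc, mul_comm]
    rw [hcc]
    have habs : ‖((γ₁ : ℂ) * c + (γ₂ : ℂ) * (starRingEnd ℂ) c)‖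
        ≤ K * ‖c‖ := by
      calc ‖((γ₁ : ℂ) * c + (γ₂ : ℂ) * (starRingEnd ℂ) c)‖
          ≤ ‖((γ₁ : ℂ) * c)‖ + ‖((γ₂ : ℂ) * (starRingEnd ℂ) c)‖ :=
            norm_add_le _ _
        _ = |γ₁| * ‖c‖ + |γ₂| * ‖c‖ := by
            simp [norm_mul, Complex.norm_real, Complex.norm_conj]
        _ = K * ‖c‖ := by rw [hK]; ring
    have h2 : Complex.normSq ((γ₁ : ℂ) * c + (γ₂ : ℂ) * (starRingEnd ℂ) c)
        ≤ (K * ‖c‖) ^ 2 := by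
      rw [← Complex.sq_norm]
      exact pow_le_pow_left₀ (norm_nonneg _) habs 2
    refine h2.trans_eq ?_
    rw [mul_pow, Complex.sq_norm, hc, Complex.normSq_mul, Complex.normSq_conj]
    ring
  -- the uniform bound
  set B : ℝ := 2 * Real.sqrt ((|α| + |β|) ^ 2 + K ^ 2) with hB
  have hGB : ∀ s : ℝ, s ∈ Set.Icc (0:ℝ) 1 → G s ≤ B := by
    rintro s ⟨hs0, hs1⟩
    have l1 : (1 - s) * α ≤ |α| := by
      nlinarith [le_abs_self α, abs_nonneg α,
        mul_nonneg (by linarith : (0:ℝ) ≤ 1 - s) (sub_nonneg.2 (le_abs_self α)),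
        mul_nonneg hs0 (abs_nonneg α)]
    have l2 : -|α| ≤ (1 - s) * α := by
      nlinarith [neg_abs_le α, abs_nonneg α,
        mul_nonneg (by linarith : (0:ℝ) ≤ 1 - s) (sub_nonneg.2 (neg_abs_le α)),
        mul_nonneg hs0 (abs_nonneg α)]
    have l3 : s * β ≤ |β| := by
      nlinarith [le_abs_self β, abs_nonneg β,
        mul_nonneg hs0 (sub_nonneg.2 (le_abs_self β)),
        mul_nonneg (by linarith : (0:ℝ) ≤ 1 - s) (abs_nonneg β)]
    have l4 : -|β| ≤ s * β := by
      nlinarith [neg_abs_le β, abs_nonneg β,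
        mul_nonneg hs0 (sub_nonneg.2 (neg_abs_le β)),
        mul_nonneg (by linarith : (0:ℝ) ≤ 1 - s) (abs_nonneg β)]
    have hsq : ((1 - s) * α - s * β) ^ 2 ≤ (|α| + |β|) ^ 2 :=
      sq_le_sq' (by linarith) (by linarith)
    have hK2 : s * (1 - s) * K ^ 2 ≤ K ^ 2 := by
      nlinarith [sq_nonneg K, sq_nonneg (2*s-1), mul_nonneg (sq_nonneg (2*s-1)) (sq_nonneg K)]
    simp only [hG, hB]
    have := Real.sqrt_le_sqrt (show ((1 - s) * α - s * β) ^ 2 + s * (1 - s) * K ^ 2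
        ≤ (|α| + |β|) ^ 2 + K ^ 2 by linarith)
    linarith
  -- nonemptiness
  haveI hne1 : Nonempty {v : EuclideanSpace ℂ (Fin 2) // ‖v‖ = 1} :=
    ⟨⟨EuclideanSpace.single 0 1, by simp⟩⟩
  haveI hne2 : Nonempty (Set.Icc (0:ℝ) 1) := ⟨⟨0, by norm_num⟩⟩
  -- membership of normSq (v 1) in [0,1]
  have hmem : ∀ v : EuclideanSpace ℂ (Fin 2), ‖v‖ = 1 →
      Complex.normSq (v 1) ∈ Set.Icc (0:ℝ) 1 := by
    intro v hv
    have := hsum v hv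
    exact ⟨Complex.normSq_nonneg _, by nlinarith [Complex.normSq_nonneg (v 0)]⟩
  -- per-vector bound: traceNorm ≤ G (normSq (v 1))
  have hvG : ∀ v : EuclideanSpace ℂ (Fin 2), ‖v‖ = 1 →
      traceNorm (chan φ₁ θ₁ (outer2 v) - chan φ₂ θ₂ (outer2 v))
        ≤ G (Complex.normSq (v 1)) := by
    intro v hv
    rw [key v hv]
    simp only [hG]
    have h0 : Complex.normSq (v 0) = 1 - Complex.normSq (v 1) := by
      have := hsum v hv; linarith
    have hb := hbv v
    rw [h0] at hb
    have := Real.sqrt_le_sqrt (show ((1 - Complex.normSq (v 1)) * α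
          - Complex.normSq (v 1) * β) ^ 2 +
        Complex.normSq ((γ₁ : ℂ) * (v 0 * (starRingEnd ℂ) (v 1))
          + (γ₂ : ℂ) * ((starRingEnd ℂ) (v 0) * v 1))
        ≤ ((1 - Complex.normSq (v 1)) * α - Complex.normSq (v 1) * β) ^ 2 +
          Complex.normSq (v 1) * (1 - Complex.normSq (v 1)) * K ^ 2 by linarith)
    linarith
  -- BddAbove for both families
  have hbdd1 : BddAbove (Set.range fun v : {v : EuclideanSpace ℂ (Fin 2) // ‖v‖ = 1} =>
      traceNorm (chan φ₁ θ₁ (outer2 v.1) - chan φ₂ θ₂ (outer2 v.1))) := by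
    refine ⟨B, ?_⟩
    rintro x ⟨v, rfl⟩
    exact (hvG v.1 v.2).trans (hGB _ (hmem v.1 v.2))
  have hbdd2 : BddAbove (Set.range fun s : Set.Icc (0:ℝ) 1 =>
      2 * Real.sqrt (((1 - (s : ℝ)) * α + (s : ℝ) * β) ^ 2 +
          4 * (s : ℝ) * (1 - (s : ℝ)) * ((K / 2) ^ 2 - α * β))) := by
    refine ⟨B, ?_⟩
    rintro x ⟨s, rfl⟩
    have : 2 * Real.sqrt (((1 - (s : ℝ)) * α + (s : ℝ) * β) ^ 2 +
        4 * (s : ℝ) * (1 - (s : ℝ)) * ((K / 2) ^ 2 - α * β)) = G (s : ℝ) := by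
      simp only [hG]; rw [hinner (s : ℝ)]
    show 2 * Real.sqrt (((1 - (s : ℝ)) * α + (s : ℝ) * β) ^ 2 +
        4 * (s : ℝ) * (1 - (s : ℝ)) * ((K / 2) ^ 2 - α * β)) ≤ B
    rw [this]
    exact hGB _ s.2
  -- conclusion
  rw [S1]
  apply le_antisymm
  · apply ciSup_le
    intro v
    refine (hvG v.1 v.2).trans ?_
    have heq : G (Complex.normSq (v.1 1)) =
        2 * Real.sqrt (((1 - (Complex.normSq (v.1 1))) * α + (Complex.normSq (v.1 1)) * β) ^ 2 +
          4 * (Complex.normSq (v.1 1)) * (1 - (Complex.normSq (v.1 1))) * ((K / 2) ^ 2 - α * β))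
        := by simp only [hG]; rw [hinner]
    rw [heq]
    exact le_ciSup hbdd2 (⟨Complex.normSq (v.1 1), hmem v.1 v.2⟩ : Set.Icc (0:ℝ) 1)
  · apply ciSup_le
    rintro ⟨s, hs0, hs1⟩
    -- construct optimal vector
    set e : ℂ := if 0 ≤ γ₁ * γ₂ then 1 else Complex.I with he
    have hne : Complex.normSq e = 1 := by
      rw [he]; split <;> simp
    have hphase : Complex.normSq ((γ₁ : ℂ) * (starRingEnd ℂ) e + (γ₂ : ℂ) * e) = K ^ 2 := by
      rw [hK, he]
      split
      · rename_i hpos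
        have : ((γ₁ : ℂ) * (starRingEnd ℂ) 1 + (γ₂ : ℂ) * 1) = ((γ₁ + γ₂ : ℝ) : ℂ) := by
          rw [_root_.map_one]; push_cast; ring
        rw [this, Complex.normSq_ofReal]
        have habs : |γ₁ * γ₂| = γ₁ * γ₂ := abs_of_nonneg hpos
        have h1 : |γ₁| ^ 2 = γ₁ ^ 2 := sq_abs _
        have h2 : |γ₂| ^ 2 = γ₂ ^ 2 := sq_abs _
        have h3 : |γ₁| * |γ₂| = |γ₁ * γ₂| := (abs_mul _ _).symm
        nlinarith
      · rename_i hneg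
        push_neg at hneg
        have : ((γ₁ : ℂ) * (starRingEnd ℂ) Complex.I + (γ₂ : ℂ) * Complex.I)
            = ((γ₂ - γ₁ : ℝ) : ℂ) * Complex.I := by
          rw [Complex.conj_I]; push_cast; ring
        rw [this, Complex.normSq_mul, Complex.normSq_ofReal, Complex.normSq_I]
        have habs : |γ₁ * γ₂| = -(γ₁ * γ₂) := abs_of_neg hneg
        have h1 : |γ₁| ^ 2 = γ₁ ^ 2 := sq_abs _
        have h2 : |γ₂| ^ 2 = γ₂ ^ 2 := sq_abs _
        have h3 : |γ₁| * |γ₂| = |γ₁ * γ₂| := (abs_mul _ _).symm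
        nlinarith
    set v : EuclideanSpace ℂ (Fin 2) :=
      WithLp.toLp 2 ![((Real.sqrt (1 - s) : ℝ) : ℂ), ((Real.sqrt s : ℝ) : ℂ) * e] with hvdef
    have hv0 : v 0 = ((Real.sqrt (1 - s) : ℝ) : ℂ) := rfl
    have hv1 : v 1 = ((Real.sqrt s : ℝ) : ℂ) * e := rfl
    have hns0 : Complex.normSq (v 0) = 1 - s := by
      rw [hv0, Complex.normSq_ofReal, Real.mul_self_sqrt (by linarith)]
    have hns1 : Complex.normSq (v 1) = s := by
      rw [hv1, Complex.normSq_mul, Complex.normSq_ofReal, hne,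
        Real.mul_self_sqrt (by linarith)]
      ring
    have hnorm : ‖v‖ = 1 := by
      rw [EuclideanSpace.norm_eq]
      have : ∑ i, ‖v i‖ ^ 2 = 1 := by
        rw [Fin.sum_univ_two]
        have e0 : ‖v 0‖ ^ 2 = 1 - s := by
          rw [Complex.sq_norm, hns0]
        have e1 : ‖v 1‖ ^ 2 = s := by
          rw [Complex.sq_norm, hns1]
        rw [e0, e1]; ring
      rw [this, Real.sqrt_one]
    -- value of the off-diagonal term
    have hbval : Complex.normSq ((γ₁ : ℂ) * (v 0 * (starRingEnd ℂ) (v 1))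
        + (γ₂ : ℂ) * ((starRingEnd ℂ) (v 0) * v 1)) = s * (1 - s) * K ^ 2 := by
      have : ((γ₁ : ℂ) * (v 0 * (starRingEnd ℂ) (v 1))
          + (γ₂ : ℂ) * ((starRingEnd ℂ) (v 0) * v 1))
          = ((Real.sqrt (1 - s) * Real.sqrt s : ℝ) : ℂ)
            * ((γ₁ : ℂ) * (starRingEnd ℂ) e + (γ₂ : ℂ) * e) := by
        rw [hv0, hv1]
        simp only [_root_.map_mul, Complex.conj_ofReal]
        push_cast
        ring
      rw [this, Complex.normSq_mul, Complex.normSq_ofReal, hphase]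
      have h1 : Real.sqrt (1-s) * Real.sqrt (1-s) = 1 - s := Real.mul_self_sqrt (by linarith)
      have h2 : Real.sqrt s * Real.sqrt s = s := Real.mul_self_sqrt hs0
      linear_combination (Real.sqrt s * Real.sqrt s * K^2) * h1 + ((1-s) * K^2) * h2
    have hval : traceNorm (chan φ₁ θ₁ (outer2 v) - chan φ₂ θ₂ (outer2 v)) = G s := by
      rw [key v hnorm, hns1, hbval]
    have hGs : 2 * Real.sqrt (((1 - s) * α + s * β) ^ 2 +
        4 * s * (1 - s) * ((K / 2) ^ 2 - α * β)) = G s := by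
      simp only [hG]; rw [hinner]
    show 2 * Real.sqrt (((1 - s) * α + s * β) ^ 2 +
        4 * s * (1 - s) * ((K / 2) ^ 2 - α * β)) ≤ _
    rw [hGs, ← hval]
    exact le_ciSup hbdd1 (⟨v, hnorm⟩ : {v : EuclideanSpace ℂ (Fin 2) // ‖v‖ = 1})
end
end

section
/- In the discrimination of the two non-extremal channels N₁ and N₂ (convex combinations of extremal channels), if γ_M² ≤ αβ then side entanglement is not useful: S₂ = S₁. -/
open Matrix
open scoped Kronecker

noncomputable section

/-- The non-extremal qubit channel `λ N_{φ,θ} + (1−λ) N_{φ',θ'}`. -/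
def chanC (l φ θ φ' θ' : ℝ) (ρ : Matrix (Fin 2) (Fin 2) ℂ) : Matrix (Fin 2) (Fin 2) ℂ :=
  (l : ℂ) • chan φ θ ρ + ((1 - l : ℝ) : ℂ) • chan φ' θ' ρ

/-- The channel `id ⊗ (λ N_{φ,θ} + (1−λ) N_{φ',θ'})` on two qubits. -/
def chanCE (l φ θ φ' θ' : ℝ) (ρ : Matrix (Fin 2 × Fin 2) (Fin 2 × Fin 2) ℂ) :
    Matrix (Fin 2 × Fin 2) (Fin 2 × Fin 2) ℂ :=
  (l : ℂ) • chanE φ θ ρ + ((1 - l : ℝ) : ℂ) • chanE φ' θ' ρ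

/-- Optimal single-qubit distinguishability of the two non-extremal channels. -/
def S1c (l₁ φ₁ θ₁ φ₁' θ₁' l₂ φ₂ θ₂ φ₂' θ₂' : ℝ) : ℝ :=
  ⨆ v : {v : EuclideanSpace ℂ (Fin 2) // ‖v‖ = 1},
    traceNorm (chanC l₁ φ₁ θ₁ φ₁' θ₁' (outer2 v.1) - chanC l₂ φ₂ θ₂ φ₂' θ₂' (outer2 v.1))

/-- Optimal entanglement-assisted distinguishability of the two non-extremal channels. -/
def S2c (l₁ φ₁ θ₁ φ₁' θ₁' l₂ φ₂ θ₂ φ₂' θ₂' : ℝ) : ℝ :=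
  ⨆ w : {w : EuclideanSpace ℂ (Fin 2 × Fin 2) // ‖w‖ = 1},
    traceNorm (chanCE l₁ φ₁ θ₁ φ₁' θ₁' (outer4 w.1) - chanCE l₂ φ₂ θ₂ φ₂' θ₂' (outer4 w.1))

namespace TN

open scoped ComplexOrder

variable {n : Type*} [Fintype n] [DecidableEq n]

lemma sum_basis_dot (P : Matrix n n ℂ) {M : Matrix n n ℂ} (hM : M.IsHermitian) :
    ∑ i, star ⇑(hM.eigenvectorBasis i) ⬝ᵥ (P *ᵥ ⇑(hM.eigenvectorBasis i)) = P.trace := by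
  have hU : (hM.eigenvectorUnitary : Matrix n n ℂ) * (hM.eigenvectorUnitary : Matrix n n ℂ)ᴴ = 1 := by
    rw [← Matrix.star_eq_conjTranspose]
    exact Matrix.mem_unitaryGroup_iff.mp hM.eigenvectorUnitary.2
  set U := (hM.eigenvectorUnitary : Matrix n n ℂ) with hUdef
  have hcol : ∀ i, ⇑(hM.eigenvectorBasis i) = fun a => U a i := by
    intro i; funext a; rw [hUdef]; exact (hM.eigenvectorUnitary_apply a i).symm
  calc ∑ i, star ⇑(hM.eigenvectorBasis i) ⬝ᵥ (P *ᵥ ⇑(hM.eigenvectorBasis i))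
      = ∑ i, (Uᴴ * P * U) i i := by
        refine Finset.sum_congr rfl fun i _ => ?_
        rw [hcol]
        simp only [dotProduct, mulVec, Matrix.mul_apply, conjTranspose_apply, Pi.star_apply,
          Finset.sum_mul, Finset.mul_sum]
        rw [Finset.sum_comm]
        refine Finset.sum_congr rfl fun a _ => Finset.sum_congr rfl fun b _ => ?_
        ring
    _ = (Uᴴ * P * U).trace := rfl
    _ = P.trace := by rw [Matrix.trace_mul_cycle, hU, Matrix.one_mul]

lemma re_trace_eq (P : Matrix n n ℂ) {M : Matrix n n ℂ} (hM : M.IsHermitian) :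
    P.trace.re = ∑ i, RCLike.re (star ⇑(hM.eigenvectorBasis i) ⬝ᵥ (P *ᵥ ⇑(hM.eigenvectorBasis i))) := by
  have := congrArg Complex.re (sum_basis_dot P hM)
  rw [Complex.re_sum] at this
  simpa using this.symm

lemma traceNorm_le_of_decomp {M P Q : Matrix n n ℂ} (hP : P.PosSemidef) (hQ : Q.PosSemidef)
    (hM : M = P - Q) : traceNorm M ≤ P.trace.re + Q.trace.re := by
  have hMh : M.IsHermitian := hM ▸ (hP.1.sub hQ.1)
  rw [traceNorm, dif_pos hMh]
  rw [re_trace_eq P hMh, re_trace_eq Q hMh, ← Finset.sum_add_distrib]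
  refine Finset.sum_le_sum fun i _ => ?_
  have key : ∀ x : n → ℂ, M *ᵥ x = P *ᵥ x - Q *ᵥ x := fun x => by rw [hM, Matrix.sub_mulVec]
  have hev : hMh.eigenvalues i
      = RCLike.re (star ⇑(hMh.eigenvectorBasis i) ⬝ᵥ (P *ᵥ ⇑(hMh.eigenvectorBasis i)))
      - RCLike.re (star ⇑(hMh.eigenvectorBasis i) ⬝ᵥ (Q *ᵥ ⇑(hMh.eigenvectorBasis i))) := by
    rw [hMh.eigenvalues_eq i, key, dotProduct_sub, map_sub]
  rw [hev]
  have h1 := hP.re_dotProduct_nonneg ⇑(hMh.eigenvectorBasis i)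
  have h2 := hQ.re_dotProduct_nonneg ⇑(hMh.eigenvectorBasis i)
  rw [abs_sub_le_iff]
  constructor <;> linarith

lemma exists_decomp {M : Matrix n n ℂ} (hM : M.IsHermitian) :
    ∃ P Q : Matrix n n ℂ, P.PosSemidef ∧ Q.PosSemidef ∧ M = P - Q ∧
      P.trace.re + Q.trace.re = traceNorm M := by
  have hU : (hM.eigenvectorUnitary : Matrix n n ℂ) * star (hM.eigenvectorUnitary : Matrix n n ℂ) = 1 :=
    Matrix.mem_unitaryGroup_iff.mp hM.eigenvectorUnitary.2
  have hU' : star (hM.eigenvectorUnitary : Matrix n n ℂ) * (hM.eigenvectorUnitary : Matrix n n ℂ) = 1 :=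
    Matrix.mem_unitaryGroup_iff'.mp hM.eigenvectorUnitary.2
  set U := (hM.eigenvectorUnitary : Matrix n n ℂ) with hUdef
  let Pm : (n → ℝ) → Matrix n n ℂ := fun d => U * diagonal (fun i => (d i : ℂ)) * star U
  have psd : ∀ d : n → ℝ, (∀ i, 0 ≤ d i) → (Pm d).PosSemidef := by
    intro d hd
    exact (Matrix.PosSemidef.diagonal (fun i => by simpa [Complex.zero_le_real] using hd i)).mul_mul_conjTranspose_same U
  have tr : ∀ d : n → ℝ, (Pm d).trace = ∑ i, (d i : ℂ) := by
    intro d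
    show (U * diagonal (fun i => (d i : ℂ)) * star U).trace = _
    rw [Matrix.trace_mul_cycle, hU', Matrix.one_mul, Matrix.trace_diagonal]
  have sub : ∀ d1 d2 : n → ℝ, Pm d1 - Pm d2 = Pm (d1 - d2) := by
    intro d1 d2
    show U * _ * star U - U * _ * star U = U * _ * star U
    rw [← Matrix.sub_mul, ← Matrix.mul_sub, Matrix.diagonal_sub]
    congr 1
    congr 1
    funext i
    simp [Pi.sub_apply]
  have hspec : M = Pm hM.eigenvalues := hM.spectral_theorem
  refine ⟨Pm (fun i => max (hM.eigenvalues i) 0), Pm (fun i => max (-hM.eigenvalues i) 0),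
    psd _ (fun i => le_max_right _ _), psd _ (fun i => le_max_right _ _), ?_, ?_⟩
  · have harg : ((fun i => max (hM.eigenvalues i) 0) - fun i => max (-hM.eigenvalues i) 0) = hM.eigenvalues :=
      funext fun i => max_zero_sub_max_neg_zero_eq_self _
    rw [sub, harg]
    exact hspec
  · rw [traceNorm, dif_pos hM]
    have t1 := congrArg Complex.re (tr (fun i => max (hM.eigenvalues i) 0))
    have t2 := congrArg Complex.re (tr (fun i => max (-hM.eigenvalues i) 0))
    rw [Complex.re_sum] at t1 t2
    simp only [Complex.ofReal_re] at t1 t2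
    rw [t1, t2, ← Finset.sum_add_distrib]
    refine Finset.sum_congr rfl fun i _ => ?_
    rcases le_or_gt 0 (hM.eigenvalues i) with h | h
    · rw [max_eq_left h, max_eq_right (by linarith), abs_of_nonneg h, add_zero]
    · rw [max_eq_right h.le, max_eq_left (by linarith), abs_of_neg h, zero_add]

lemma diag_re_nonneg {P : Matrix n n ℂ} (hP : P.PosSemidef) (p : n) : 0 ≤ (P p p).re := by
  have := hP.re_dotProduct_nonneg (Pi.single p 1)
  simpa [dotProduct, mulVec, Pi.single_apply] using this

lemma sum_abs_re_diag_le {M : Matrix n n ℂ} (hM : M.IsHermitian) :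
    ∑ i, |(M i i).re| ≤ traceNorm M := by
  obtain ⟨P, Q, hP, hQ, hMeq, htr⟩ := exists_decomp hM
  rw [← htr]
  have h1 : P.trace.re = ∑ i, (P i i).re := by
    rw [Matrix.trace, Complex.re_sum]; rfl
  have h2 : Q.trace.re = ∑ i, (Q i i).re := by
    rw [Matrix.trace, Complex.re_sum]; rfl
  rw [h1, h2, ← Finset.sum_add_distrib]
  refine Finset.sum_le_sum fun i _ => ?_
  have : M i i = P i i - Q i i := by rw [hMeq]; rfl
  rw [this, Complex.sub_re, abs_sub_le_iff]
  have := diag_re_nonneg hP i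
  have := diag_re_nonneg hQ i
  constructor <;> linarith

lemma traceNorm_submatrix_le {m : Type*} [Fintype m] [DecidableEq m]
    {M : Matrix n n ℂ} (hM : M.IsHermitian) (e : m → n) (he : Function.Injective e) :
    traceNorm (M.submatrix e e) ≤ traceNorm M := by
  obtain ⟨P, Q, hP, hQ, hMeq, htr⟩ := exists_decomp hM
  have hsub : M.submatrix e e = P.submatrix e e - Q.submatrix e e := by
    ext i j; simp [hMeq]
  refine le_trans (traceNorm_le_of_decomp (hP.submatrix e) (hQ.submatrix e) hsub) ?_
  rw [← htr]
  have key : ∀ (R : Matrix n n ℂ), R.PosSemidef → (R.submatrix e e).trace.re ≤ R.trace.re := by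
    intro R hR
    have h1 : (R.submatrix e e).trace.re = ∑ j, (R (e j) (e j)).re := by
      rw [Matrix.trace, Complex.re_sum]; rfl
    have h2 : R.trace.re = ∑ p, (R p p).re := by
      rw [Matrix.trace, Complex.re_sum]; rfl
    rw [h1, h2]
    have himg : ∑ j, (R (e j) (e j)).re = ∑ p ∈ Finset.univ.image e, (R p p).re := by
      rw [Finset.sum_image (fun a _ b _ h => he h)]
    rw [himg]
    exact Finset.sum_le_sum_of_subset_of_nonneg (Finset.subset_univ _)
      (fun p _ _ => diag_re_nonneg hR p)
  linarith [key P hP, key Q hQ]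

def outerP (u : n → ℂ) : Matrix n n ℂ := fun p q => u p * star (u q)

lemma outerP_psd (u : n → ℂ) : (outerP u).PosSemidef := by
  rw [Matrix.posSemidef_iff_dotProduct_mulVec]
  constructor
  · ext p q
    simp only [outerP, Matrix.conjTranspose_apply, star_mul', star_star]
    ring
  · intro x
    have : star x ⬝ᵥ (outerP u *ᵥ x) = star (∑ q, star (u q) * x q) * (∑ q, star (u q) * x q) := by
      simp only [dotProduct, mulVec, outerP, Pi.star_apply, star_sum, star_mul', star_star,
        Finset.sum_mul, Finset.mul_sum]
      rw [Finset.sum_comm]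
      refine Finset.sum_congr rfl fun p _ => Finset.sum_congr rfl fun q _ => ?_
      ring
    rw [this]
    exact star_mul_self_nonneg _

lemma outerP_trace_re (u : n → ℂ) : (outerP u).trace.re = ∑ p, Complex.normSq (u p) := by
  rw [Matrix.trace, Complex.re_sum]
  refine Finset.sum_congr rfl fun p _ => ?_
  show (u p * star (u p)).re = _
  rw [show star (u p) = (starRingEnd ℂ) (u p) from rfl, Complex.mul_conj]
  exact Complex.ofReal_re _

end TN
namespace TN

open scoped ComplexOrder

lemma conj_outer {m : Type*} [Fintype m] (A B : Matrix m m ℂ) (w : m → ℂ)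
    (hB : ∀ p q, B p q = w p * star (w q)) (i k : m) :
    (A * B * Aᴴ) i k = (A *ᵥ w) i * star ((A *ᵥ w) k) := by
  simp only [Matrix.mul_apply, Matrix.conjTranspose_apply, mulVec, dotProduct, hB, star_sum,
    star_mul', Finset.sum_mul, Finset.mul_sum]
  refine Finset.sum_congr rfl fun x _ => Finset.sum_congr rfl fun y _ => ?_
  ring

lemma mulVec_K0_0 (φ θ : ℝ) (w : Fin 2 × Fin 2 → ℂ) (i : Fin 2) :
    ((I2 ⊗ₖ K0 φ θ) *ᵥ w) (i, 0) = (Real.cos θ : ℂ) * w (i, 0) := by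
  simp [mulVec, dotProduct, Fintype.sum_prod_type, Fin.sum_univ_two, I2, K0, Matrix.one_apply]

lemma mulVec_K0_1 (φ θ : ℝ) (w : Fin 2 × Fin 2 → ℂ) (i : Fin 2) :
    ((I2 ⊗ₖ K0 φ θ) *ᵥ w) (i, 1) = (Real.cos φ : ℂ) * w (i, 1) := by
  simp [mulVec, dotProduct, Fintype.sum_prod_type, Fin.sum_univ_two, I2, K0, Matrix.one_apply]

lemma mulVec_K1_0 (φ θ : ℝ) (w : Fin 2 × Fin 2 → ℂ) (i : Fin 2) :
    ((I2 ⊗ₖ K1 φ θ) *ᵥ w) (i, 0) = (Real.sin φ : ℂ) * w (i, 1) := by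
  simp [mulVec, dotProduct, Fintype.sum_prod_type, Fin.sum_univ_two, I2, K1, Matrix.one_apply]

lemma mulVec_K1_1 (φ θ : ℝ) (w : Fin 2 × Fin 2 → ℂ) (i : Fin 2) :
    ((I2 ⊗ₖ K1 φ θ) *ᵥ w) (i, 1) = (Real.sin θ : ℂ) * w (i, 0) := by
  simp [mulVec, dotProduct, Fintype.sum_prod_type, Fin.sum_univ_two, I2, K1, Matrix.one_apply]

def Mx (α β γ₁ γ₂ : ℝ) (w : Fin 2 × Fin 2 → ℂ) :
    Matrix (Fin 2 × Fin 2) (Fin 2 × Fin 2) ℂ :=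
  fun p q =>
    match p.2, q.2 with
    | 0, 0 => (α:ℂ) * (w (p.1,0) * star (w (q.1,0))) - (β:ℂ) * (w (p.1,1) * star (w (q.1,1)))
    | 0, 1 => (γ₁:ℂ) * (w (p.1,0) * star (w (q.1,1))) + (γ₂:ℂ) * (w (p.1,1) * star (w (q.1,0)))
    | 1, 0 => (γ₁:ℂ) * (w (p.1,1) * star (w (q.1,0))) + (γ₂:ℂ) * (w (p.1,0) * star (w (q.1,1)))
    | 1, 1 => (β:ℂ) * (w (p.1,1) * star (w (q.1,1))) - (α:ℂ) * (w (p.1,0) * star (w (q.1,0)))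

lemma sin_sq_complex : ∀ x : ℝ, (Real.sin x : ℂ) ^ 2 = 1 - (Real.cos x : ℂ) ^ 2 := by
  intro x
  rw [← Complex.ofReal_pow, Real.sin_sq, Complex.ofReal_sub, Complex.ofReal_one,
    Complex.ofReal_pow]

lemma bigE (l₁ φ₁ θ₁ φ₁' θ₁' l₂ φ₂ θ₂ φ₂' θ₂' α β γ₁ γ₂ : ℝ)
    (hα : α = (l₁ * Real.cos θ₁ ^ 2 + (1 - l₁) * Real.cos θ₁' ^ 2) -
              (l₂ * Real.cos θ₂ ^ 2 + (1 - l₂) * Real.cos θ₂' ^ 2))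
    (hβ : β = (l₁ * Real.cos φ₁ ^ 2 + (1 - l₁) * Real.cos φ₁' ^ 2) -
              (l₂ * Real.cos φ₂ ^ 2 + (1 - l₂) * Real.cos φ₂' ^ 2))
    (hγ₁ : γ₁ = l₁ * Real.cos φ₁ * Real.cos θ₁ + (1 - l₁) * Real.cos φ₁' * Real.cos θ₁' -
                l₂ * Real.cos φ₂ * Real.cos θ₂ - (1 - l₂) * Real.cos φ₂' * Real.cos θ₂')
    (hγ₂ : γ₂ = l₁ * Real.sin φ₁ * Real.sin θ₁ + (1 - l₁) * Real.sin φ₁' * Real.sin θ₁' -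
                l₂ * Real.sin φ₂ * Real.sin θ₂ - (1 - l₂) * Real.sin φ₂' * Real.sin θ₂')
    (w : EuclideanSpace ℂ (Fin 2 × Fin 2)) :
    chanCE l₁ φ₁ θ₁ φ₁' θ₁' (outer4 w) - chanCE l₂ φ₂ θ₂ φ₂' θ₂' (outer4 w)
      = Mx α β γ₁ γ₂ w := by
  have s := sin_sq_complex
  subst hα hβ hγ₁ hγ₂
  have co : ∀ (A : Matrix (Fin 2 × Fin 2) (Fin 2 × Fin 2) ℂ) (i k : Fin 2 × Fin 2),
      (A * outer4 w * Aᴴ) i k = (A *ᵥ ⇑w) i * star ((A *ᵥ ⇑w) k) :=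
    fun A i k => conj_outer A (outer4 w) (⇑w) (fun _ _ => rfl) i k
  ext ⟨i, j⟩ ⟨k, l⟩
  simp only [chanCE, chanE, Matrix.sub_apply, Matrix.add_apply, Matrix.smul_apply, co,
    smul_eq_mul]
  fin_cases j <;> fin_cases l <;>
    simp only [Fin.isValue, Fin.zero_eta, Fin.mk_one, mulVec_K0_0, mulVec_K0_1, mulVec_K1_0,
      mulVec_K1_1, Mx, star_mul', Complex.star_def, Complex.conj_ofReal,
      Complex.ofReal_add, Complex.ofReal_sub, Complex.ofReal_mul, Complex.ofReal_pow,
      Complex.ofReal_one, Complex.ofReal_neg] <;>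
    ring_nf <;>
    (try simp only [s]) <;>
    ring

lemma Mx_herm (α β γ₁ γ₂ : ℝ) (w : Fin 2 × Fin 2 → ℂ) : (Mx α β γ₁ γ₂ w).IsHermitian := by
  show _ᴴ = _
  ext ⟨i, j⟩ ⟨k, l⟩
  fin_cases j <;> fin_cases l <;>
    simp only [Matrix.conjTranspose_apply, Mx, Fin.isValue, Fin.zero_eta, Fin.mk_one,
      star_sub, star_add, star_mul', star_star, Complex.star_def, Complex.conj_ofReal,
      Complex.conj_conj] <;>
    ring

lemma Mx_neg (α β γ₁ γ₂ : ℝ) (w : Fin 2 × Fin 2 → ℂ) :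
    Mx α β γ₁ γ₂ w = -(Mx (-α) (-β) (-γ₁) (-γ₂) w) := by
  ext ⟨i, j⟩ ⟨k, l⟩
  fin_cases j <;> fin_cases l <;>
    simp only [Mx, Matrix.neg_apply, Fin.isValue, Fin.zero_eta, Fin.mk_one,
      Complex.ofReal_neg] <;>
    ring

lemma decomp_bound (a b g₁ g₂ : ℝ) (ha : 0 ≤ a) (hb : 0 ≤ b)
    (h1 : g₁ ^ 2 ≤ a * b) (h2 : g₂ ^ 2 ≤ a * b) (w : Fin 2 × Fin 2 → ℂ) :
    ∃ P Q : Matrix (Fin 2 × Fin 2) (Fin 2 × Fin 2) ℂ, P.PosSemidef ∧ Q.PosSemidef ∧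
      Mx a b g₁ g₂ w = P - Q ∧
      P.trace.re + Q.trace.re =
        2 * (a * (∑ i : Fin 2, Complex.normSq (w (i, 0)))
           + b * (∑ i : Fin 2, Complex.normSq (w (i, 1)))) := by
  have hg₁0 : a = 0 → g₁ = 0 := by
    intro h; nlinarith [sq_nonneg g₁]
  have hg₂0 : b = 0 → g₂ = 0 := by
    intro h; nlinarith [sq_nonneg g₂]
  set t₁ : ℝ := if a = 0 then 0 else g₁ / Real.sqrt a with ht₁
  set t₂ : ℝ := if b = 0 then 0 else g₂ / Real.sqrt b with ht₂
  have f1 : Real.sqrt a * t₁ = g₁ := by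
    rcases eq_or_ne a 0 with h | h
    · simp [ht₁, h, hg₁0 h]
    · rw [ht₁, if_neg h]
      have : Real.sqrt a ≠ 0 := by
        simpa [Real.sqrt_eq_zero ha] using h
      field_simp
  have f2 : Real.sqrt b * t₂ = g₂ := by
    rcases eq_or_ne b 0 with h | h
    · simp [ht₂, h, hg₂0 h]
    · rw [ht₂, if_neg h]
      have : Real.sqrt b ≠ 0 := by
        simpa [Real.sqrt_eq_zero hb] using h
      field_simp
  have e1 : t₁ ^ 2 ≤ b := by
    rcases eq_or_ne a 0 with h | h
    · simpa [ht₁, h] using hb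
    · have hapos : 0 < a := lt_of_le_of_ne ha (Ne.symm h)
      rw [ht₁, if_neg h, div_pow, Real.sq_sqrt ha, div_le_iff₀ hapos]
      nlinarith
  have e2 : t₂ ^ 2 ≤ a := by
    rcases eq_or_ne b 0 with h | h
    · simpa [ht₂, h] using ha
    · have hbpos : 0 < b := lt_of_le_of_ne hb (Ne.symm h)
      rw [ht₂, if_neg h, div_pow, Real.sq_sqrt hb, div_le_iff₀ hbpos]
      nlinarith
  set r₁ : ℝ := Real.sqrt (b - t₁ ^ 2) with hr₁def
  set r₂ : ℝ := Real.sqrt (a - t₂ ^ 2) with hr₂def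
  have hr₁ : r₁ ^ 2 = b - t₁ ^ 2 := Real.sq_sqrt (by linarith)
  have hr₂ : r₂ ^ 2 = a - t₂ ^ 2 := Real.sq_sqrt (by linarith)
  set u : Fin 2 × Fin 2 → ℂ := fun p =>
    match p.2 with
    | 0 => (Real.sqrt a : ℂ) * w (p.1, 0)
    | 1 => (t₁ : ℂ) * w (p.1, 1) with hu
  set z : Fin 2 × Fin 2 → ℂ := fun p =>
    match p.2 with
    | 0 => 0
    | 1 => (r₁ : ℂ) * w (p.1, 1) with hz
  set v : Fin 2 × Fin 2 → ℂ := fun p =>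
    match p.2 with
    | 0 => (Real.sqrt b : ℂ) * w (p.1, 1)
    | 1 => -(t₂ : ℂ) * w (p.1, 0) with hv
  set z2 : Fin 2 × Fin 2 → ℂ := fun p =>
    match p.2 with
    | 0 => 0
    | 1 => (r₂ : ℂ) * w (p.1, 0) with hz2
  have c1 : (Real.sqrt a : ℂ) * (t₁ : ℂ) = (g₁ : ℂ) := by
    rw [← Complex.ofReal_mul, f1]
  have c2 : (t₁ : ℂ) ^ 2 + (r₁ : ℂ) ^ 2 = (b : ℂ) := by
    rw [← Complex.ofReal_pow, ← Complex.ofReal_pow, ← Complex.ofReal_add, hr₁]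
    norm_num
  have c3 : (Real.sqrt a : ℂ) * (Real.sqrt a : ℂ) = (a : ℂ) := by
    rw [← Complex.ofReal_mul, Real.mul_self_sqrt ha]
  have c4 : (Real.sqrt b : ℂ) * (t₂ : ℂ) = (g₂ : ℂ) := by
    rw [← Complex.ofReal_mul, f2]
  have c5 : (t₂ : ℂ) ^ 2 + (r₂ : ℂ) ^ 2 = (a : ℂ) := by
    rw [← Complex.ofReal_pow, ← Complex.ofReal_pow, ← Complex.ofReal_add, hr₂]
    norm_num
  have c6 : (Real.sqrt b : ℂ) * (Real.sqrt b : ℂ) = (b : ℂ) := by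
    rw [← Complex.ofReal_mul, Real.mul_self_sqrt hb]
  refine ⟨outerP u + outerP z, outerP v + outerP z2,
    (outerP_psd u).add (outerP_psd z), (outerP_psd v).add (outerP_psd z2), ?_, ?_⟩
  · ext ⟨i, j⟩ ⟨k, l⟩
    fin_cases j <;> fin_cases l <;>
      simp only [Mx, outerP, hu, hz, hv, hz2, Matrix.sub_apply, Matrix.add_apply,
        Fin.isValue, Fin.zero_eta, Fin.mk_one, star_mul', star_star, star_zero, star_neg,
        Complex.star_def, Complex.conj_ofReal, mul_zero, zero_mul, add_zero, zero_add, neg_neg,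
        neg_mul, mul_neg]
    · linear_combination - (w (i, 0) * (starRingEnd ℂ) (w (k, 0))) * c3
        + (w (i, 1) * (starRingEnd ℂ) (w (k, 1))) * c6
    · linear_combination - (w (i, 0) * (starRingEnd ℂ) (w (k, 1))) * c1
        - (w (i, 1) * (starRingEnd ℂ) (w (k, 0))) * c4
    · linear_combination - (w (i, 1) * (starRingEnd ℂ) (w (k, 0))) * c1
        - (w (i, 0) * (starRingEnd ℂ) (w (k, 1))) * c4
    · linear_combination - (w (i, 1) * (starRingEnd ℂ) (w (k, 1))) * c2
        + (w (i, 0) * (starRingEnd ℂ) (w (k, 0))) * c5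
  · rw [Matrix.trace_add, Matrix.trace_add, Complex.add_re, Complex.add_re,
      outerP_trace_re, outerP_trace_re, outerP_trace_re, outerP_trace_re]
    simp only [hu, hz, hv, hz2, Fintype.sum_prod_type, Fin.sum_univ_two,
      Complex.normSq_mul, Complex.normSq_ofReal, Complex.normSq_zero, Complex.normSq_neg]
    have ra : Real.sqrt a * Real.sqrt a = a := Real.mul_self_sqrt ha
    have rb : Real.sqrt b * Real.sqrt b = b := Real.mul_self_sqrt hb
    have rr1 : t₁ * t₁ + r₁ * r₁ = b := by nlinarith [hr₁]
    have rr2 : t₂ * t₂ + r₂ * r₂ = a := by nlinarith [hr₂]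
    linear_combination (Complex.normSq (w (0, 0)) + Complex.normSq (w (1, 0))) * ra
      + (Complex.normSq (w (0, 1)) + Complex.normSq (w (1, 1))) * rr1
      + (Complex.normSq (w (0, 1)) + Complex.normSq (w (1, 1))) * rb
      + (Complex.normSq (w (0, 0)) + Complex.normSq (w (1, 0))) * rr2

end TN
namespace TN

open scoped ComplexOrder

def Mx2 (α β γ₁ γ₂ : ℝ) (v : Fin 2 → ℂ) : Matrix (Fin 2) (Fin 2) ℂ :=
  fun p q =>
    match p, q with
    | 0, 0 => (α:ℂ) * (v 0 * star (v 0)) - (β:ℂ) * (v 1 * star (v 1))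
    | 0, 1 => (γ₁:ℂ) * (v 0 * star (v 1)) + (γ₂:ℂ) * (v 1 * star (v 0))
    | 1, 0 => (γ₁:ℂ) * (v 1 * star (v 0)) + (γ₂:ℂ) * (v 0 * star (v 1))
    | 1, 1 => (β:ℂ) * (v 1 * star (v 1)) - (α:ℂ) * (v 0 * star (v 0))

lemma mulVec2_K0_0 (φ θ : ℝ) (v : Fin 2 → ℂ) :
    ((K0 φ θ) *ᵥ v) 0 = (Real.cos θ : ℂ) * v 0 := by
  simp [mulVec, dotProduct, Fin.sum_univ_two, K0]

lemma mulVec2_K0_1 (φ θ : ℝ) (v : Fin 2 → ℂ) :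
    ((K0 φ θ) *ᵥ v) 1 = (Real.cos φ : ℂ) * v 1 := by
  simp [mulVec, dotProduct, Fin.sum_univ_two, K0]

lemma mulVec2_K1_0 (φ θ : ℝ) (v : Fin 2 → ℂ) :
    ((K1 φ θ) *ᵥ v) 0 = (Real.sin φ : ℂ) * v 1 := by
  simp [mulVec, dotProduct, Fin.sum_univ_two, K1]

lemma mulVec2_K1_1 (φ θ : ℝ) (v : Fin 2 → ℂ) :
    ((K1 φ θ) *ᵥ v) 1 = (Real.sin θ : ℂ) * v 0 := by
  simp [mulVec, dotProduct, Fin.sum_univ_two, K1]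

lemma smallE (l₁ φ₁ θ₁ φ₁' θ₁' l₂ φ₂ θ₂ φ₂' θ₂' α β γ₁ γ₂ : ℝ)
    (hα : α = (l₁ * Real.cos θ₁ ^ 2 + (1 - l₁) * Real.cos θ₁' ^ 2) -
              (l₂ * Real.cos θ₂ ^ 2 + (1 - l₂) * Real.cos θ₂' ^ 2))
    (hβ : β = (l₁ * Real.cos φ₁ ^ 2 + (1 - l₁) * Real.cos φ₁' ^ 2) -
              (l₂ * Real.cos φ₂ ^ 2 + (1 - l₂) * Real.cos φ₂' ^ 2))
    (hγ₁ : γ₁ = l₁ * Real.cos φ₁ * Real.cos θ₁ + (1 - l₁) * Real.cos φ₁' * Real.cos θ₁' -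
                l₂ * Real.cos φ₂ * Real.cos θ₂ - (1 - l₂) * Real.cos φ₂' * Real.cos θ₂')
    (hγ₂ : γ₂ = l₁ * Real.sin φ₁ * Real.sin θ₁ + (1 - l₁) * Real.sin φ₁' * Real.sin θ₁' -
                l₂ * Real.sin φ₂ * Real.sin θ₂ - (1 - l₂) * Real.sin φ₂' * Real.sin θ₂')
    (v : EuclideanSpace ℂ (Fin 2)) :
    chanC l₁ φ₁ θ₁ φ₁' θ₁' (outer2 v) - chanC l₂ φ₂ θ₂ φ₂' θ₂' (outer2 v)
      = Mx2 α β γ₁ γ₂ v := by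
  have s := sin_sq_complex
  subst hα hβ hγ₁ hγ₂
  have co : ∀ (A : Matrix (Fin 2) (Fin 2) ℂ) (i k : Fin 2),
      (A * outer2 v * Aᴴ) i k = (A *ᵥ ⇑v) i * star ((A *ᵥ ⇑v) k) :=
    fun A i k => conj_outer A (outer2 v) (⇑v) (fun _ _ => rfl) i k
  ext i k
  simp only [chanC, chan, Matrix.sub_apply, Matrix.add_apply, Matrix.smul_apply, co,
    smul_eq_mul]
  fin_cases i <;> fin_cases k <;>
    simp only [Fin.isValue, Fin.zero_eta, Fin.mk_one, mulVec2_K0_0, mulVec2_K0_1, mulVec2_K1_0,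
      mulVec2_K1_1, Mx2, star_mul', Complex.star_def, Complex.conj_ofReal,
      Complex.ofReal_add, Complex.ofReal_sub, Complex.ofReal_mul, Complex.ofReal_pow,
      Complex.ofReal_one, Complex.ofReal_neg] <;>
    ring_nf <;>
    (try simp only [s]) <;>
    ring

def wpad (v : EuclideanSpace ℂ (Fin 2)) : EuclideanSpace ℂ (Fin 2 × Fin 2) :=
  WithLp.toLp 2 (fun p : Fin 2 × Fin 2 => if p.1 = 0 then v p.2 else 0)

lemma wpad_apply (v : EuclideanSpace ℂ (Fin 2)) (p : Fin 2 × Fin 2) :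
    wpad v p = if p.1 = 0 then v p.2 else 0 := rfl

lemma norm_wpad (v : EuclideanSpace ℂ (Fin 2)) (hv : ‖v‖ = 1) : ‖wpad v‖ = 1 := by
  rw [EuclideanSpace.norm_eq]
  have hsum : ∑ p : Fin 2 × Fin 2, ‖wpad v p‖ ^ 2 = ∑ j : Fin 2, ‖v j‖ ^ 2 := by
    rw [Fintype.sum_prod_type]
    rw [Fin.sum_univ_two]
    simp [wpad_apply]
  rw [hsum, ← EuclideanSpace.norm_eq, hv]

lemma Mx2_submatrix (α β γ₁ γ₂ : ℝ) (v : EuclideanSpace ℂ (Fin 2)) :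
    Mx2 α β γ₁ γ₂ v
      = (Mx α β γ₁ γ₂ (wpad v)).submatrix (fun j => ((0 : Fin 2), j)) (fun j => ((0 : Fin 2), j)) := by
  ext j l
  fin_cases j <;> fin_cases l <;>
    simp [Mx, Mx2, wpad_apply, Matrix.submatrix_apply]

lemma unit_sum_normSq (w : EuclideanSpace ℂ (Fin 2 × Fin 2)) (hw : ‖w‖ = 1) :
    (∑ i : Fin 2, Complex.normSq (w (i, 0))) + (∑ i : Fin 2, Complex.normSq (w (i, 1))) = 1 := by
  have h1 : ∑ p : Fin 2 × Fin 2, ‖w p‖ ^ 2 = 1 := by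
    have h := EuclideanSpace.norm_eq w
    rw [hw] at h
    exact Real.sqrt_eq_one.mp h.symm
  have h2 : ∀ z : ℂ, ‖z‖ ^ 2 = Complex.normSq z := fun z => by
    rw [Complex.sq_norm]
  simp only [h2] at h1
  rw [Fintype.sum_prod_type, Fin.sum_univ_two] at h1
  simp only [Fin.sum_univ_two]
  rw [Fin.sum_univ_two, Fin.sum_univ_two] at h1
  linarith

lemma normSq_sum_nonneg (w : EuclideanSpace ℂ (Fin 2 × Fin 2)) (j : Fin 2) :
    0 ≤ ∑ i : Fin 2, Complex.normSq (w (i, j)) :=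
  Finset.sum_nonneg fun i _ => Complex.normSq_nonneg _

lemma main_bound (α β γ₁ γ₂ : ℝ) (hab1 : γ₁ ^ 2 ≤ α * β) (hab2 : γ₂ ^ 2 ≤ α * β)
    (w : EuclideanSpace ℂ (Fin 2 × Fin 2)) (hw : ‖w‖ = 1) :
    traceNorm (Mx α β γ₁ γ₂ w) ≤ 2 * max |α| |β| := by
  have hX := normSq_sum_nonneg w 0
  have hY := normSq_sum_nonneg w 1
  have hXY := unit_sum_normSq w hw
  have habs : ∀ a b : ℝ, 0 ≤ a → 0 ≤ b →
      2 * (a * (∑ i : Fin 2, Complex.normSq (w (i, 0)))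
         + b * (∑ i : Fin 2, Complex.normSq (w (i, 1)))) ≤ 2 * max a b := by
    intro a b ha hb
    have h1 : a * (∑ i : Fin 2, Complex.normSq (w (i, 0)))
        ≤ max a b * (∑ i : Fin 2, Complex.normSq (w (i, 0))) :=
      mul_le_mul_of_nonneg_right (le_max_left a b) hX
    have h2 : b * (∑ i : Fin 2, Complex.normSq (w (i, 1)))
        ≤ max a b * (∑ i : Fin 2, Complex.normSq (w (i, 1))) :=
      mul_le_mul_of_nonneg_right (le_max_right a b) hY
    calc 2 * (a * (∑ i : Fin 2, Complex.normSq (w (i, 0)))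
           + b * (∑ i : Fin 2, Complex.normSq (w (i, 1))))
        ≤ 2 * (max a b * ((∑ i : Fin 2, Complex.normSq (w (i, 0)))
           + (∑ i : Fin 2, Complex.normSq (w (i, 1))))) := by rw [mul_add]; linarith
      _ = 2 * max a b := by rw [hXY, mul_one]
  have hsign : (0 ≤ α ∧ 0 ≤ β) ∨ (α ≤ 0 ∧ β ≤ 0) := by
    have hab : 0 ≤ α * β := le_trans (sq_nonneg γ₁) hab1
    rcases le_or_gt 0 α with h1 | h1 <;> rcases le_or_gt 0 β with h2 | h2
    · exact Or.inl ⟨h1, h2⟩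
    · exact Or.inr ⟨by nlinarith, h2.le⟩
    · exact Or.inr ⟨h1.le, by nlinarith⟩
    · exact Or.inr ⟨h1.le, h2.le⟩
  rcases hsign with ⟨h1, h2⟩ | ⟨h1, h2⟩
  · obtain ⟨P, Q, hP, hQ, heq, htr⟩ := decomp_bound α β γ₁ γ₂ h1 h2 hab1 hab2 w
    refine le_trans (traceNorm_le_of_decomp hP hQ heq) ?_
    rw [htr, abs_of_nonneg h1, abs_of_nonneg h2]
    exact habs α β h1 h2
  · obtain ⟨P, Q, hP, hQ, heq, htr⟩ := decomp_bound (-α) (-β) (-γ₁) (-γ₂)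
      (by linarith) (by linarith) (by nlinarith) (by nlinarith) w
    have heq' : Mx α β γ₁ γ₂ w = Q - P := by
      rw [Mx_neg, heq, neg_sub]
    refine le_trans (traceNorm_le_of_decomp hQ hP heq') ?_
    rw [abs_of_nonpos h1, abs_of_nonpos h2]
    refine le_trans (le_of_eq (by linarith)) (habs (-α) (-β) (by linarith) (by linarith))

end TN
namespace TN

lemma Mx2_herm (α β γ₁ γ₂ : ℝ) (v : Fin 2 → ℂ) : (Mx2 α β γ₁ γ₂ v).IsHermitian := by
  show _ᴴ = _
  ext j l
  fin_cases j <;> fin_cases l <;>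
    simp only [Matrix.conjTranspose_apply, Mx2, Fin.isValue, Fin.zero_eta, Fin.mk_one,
      star_sub, star_add, star_mul', star_star, Complex.star_def, Complex.conj_ofReal,
      Complex.conj_conj] <;>
    ring

end TN

theorem nonextreme_gammaM_sq_le_no_side_entanglement
    (l₁ l₂ θ₁ φ₁ θ₁' φ₁' θ₂ φ₂ θ₂' φ₂' : ℝ)
    (hl₁ : l₁ ∈ Set.Ioo (0 : ℝ) 1) (hl₂ : l₂ ∈ Set.Ioo (0 : ℝ) 1)
    (hθ₁ : θ₁ ∈ Set.Icc 0 Real.pi) (hφ₁ : φ₁ ∈ Set.Icc 0 Real.pi)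
    (hθ₁' : θ₁' ∈ Set.Icc 0 Real.pi) (hφ₁' : φ₁' ∈ Set.Icc 0 Real.pi)
    (hθ₂ : θ₂ ∈ Set.Icc 0 Real.pi) (hφ₂ : φ₂ ∈ Set.Icc 0 Real.pi)
    (hθ₂' : θ₂' ∈ Set.Icc 0 Real.pi) (hφ₂' : φ₂' ∈ Set.Icc 0 Real.pi)
    (α β γ₁ γ₂ : ℝ)
    (hα : α = (l₁ * Real.cos θ₁ ^ 2 + (1 - l₁) * Real.cos θ₁' ^ 2) -
              (l₂ * Real.cos θ₂ ^ 2 + (1 - l₂) * Real.cos θ₂' ^ 2))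
    (hβ : β = (l₁ * Real.cos φ₁ ^ 2 + (1 - l₁) * Real.cos φ₁' ^ 2) -
              (l₂ * Real.cos φ₂ ^ 2 + (1 - l₂) * Real.cos φ₂' ^ 2))
    (hγ₁ : γ₁ = l₁ * Real.cos φ₁ * Real.cos θ₁ + (1 - l₁) * Real.cos φ₁' * Real.cos θ₁' -
                l₂ * Real.cos φ₂ * Real.cos θ₂ - (1 - l₂) * Real.cos φ₂' * Real.cos θ₂')
    (hγ₂ : γ₂ = l₁ * Real.sin φ₁ * Real.sin θ₁ + (1 - l₁) * Real.sin φ₁' * Real.sin θ₁' -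
                l₂ * Real.sin φ₂ * Real.sin θ₂ - (1 - l₂) * Real.sin φ₂' * Real.sin θ₂')
    (γM : ℝ) (hγM : γM = if |γ₂| ≤ |γ₁| then γ₁ else γ₂)
    (hc : γM ^ 2 ≤ α * β) :
    S2c l₁ φ₁ θ₁ φ₁' θ₁' l₂ φ₂ θ₂ φ₂' θ₂' = S1c l₁ φ₁ θ₁ φ₁' θ₁' l₂ φ₂ θ₂ φ₂' θ₂' := by
  classical
  have hg : γ₁ ^ 2 ≤ α * β ∧ γ₂ ^ 2 ≤ α * β := by
    rcases le_or_gt |γ₂| |γ₁| with h | h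
    · have hM : γM = γ₁ := by rw [hγM, if_pos h]
      have h2 : γ₂ ^ 2 ≤ γ₁ ^ 2 := by
        have := pow_le_pow_left₀ (abs_nonneg γ₂) h 2
        rwa [sq_abs, sq_abs] at this
      exact ⟨hM ▸ hc, le_trans h2 (hM ▸ hc)⟩
    · have hM : γM = γ₂ := by rw [hγM, if_neg (not_le.mpr h)]
      have h2 : γ₁ ^ 2 ≤ γ₂ ^ 2 := by
        have := pow_le_pow_left₀ (abs_nonneg γ₁) h.le 2
        rwa [sq_abs, sq_abs] at this
      exact ⟨le_trans h2 (hM ▸ hc), hM ▸ hc⟩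
  set B : ℝ := 2 * max |α| |β| with hB
  set F2 : {w : EuclideanSpace ℂ (Fin 2 × Fin 2) // ‖w‖ = 1} → ℝ := fun w =>
    traceNorm (chanCE l₁ φ₁ θ₁ φ₁' θ₁' (outer4 w.1) - chanCE l₂ φ₂ θ₂ φ₂' θ₂' (outer4 w.1))
    with hF2
  set F1 : {v : EuclideanSpace ℂ (Fin 2) // ‖v‖ = 1} → ℝ := fun v =>
    traceNorm (chanC l₁ φ₁ θ₁ φ₁' θ₁' (outer2 v.1) - chanC l₂ φ₂ θ₂ φ₂' θ₂' (outer2 v.1))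
    with hF1
  have hS2 : S2c l₁ φ₁ θ₁ φ₁' θ₁' l₂ φ₂ θ₂ φ₂' θ₂' = ⨆ w, F2 w := rfl
  have hS1 : S1c l₁ φ₁ θ₁ φ₁' θ₁' l₂ φ₂ θ₂ φ₂' θ₂' = ⨆ v, F1 v := rfl
  have hbound2 : ∀ w : {w : EuclideanSpace ℂ (Fin 2 × Fin 2) // ‖w‖ = 1}, F2 w ≤ B := by
    intro w
    rw [hF2]
    simp only
    rw [TN.bigE l₁ φ₁ θ₁ φ₁' θ₁' l₂ φ₂ θ₂ φ₂' θ₂' α β γ₁ γ₂ hα hβ hγ₁ hγ₂ w.1]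
    exact TN.main_bound α β γ₁ γ₂ hg.1 hg.2 w.1 w.2
  have hpadmem : ∀ v : {v : EuclideanSpace ℂ (Fin 2) // ‖v‖ = 1},
      ‖TN.wpad v.1‖ = 1 := fun v => TN.norm_wpad v.1 v.2
  have hpad : ∀ v : {v : EuclideanSpace ℂ (Fin 2) // ‖v‖ = 1},
      F1 v ≤ F2 ⟨TN.wpad v.1, hpadmem v⟩ := by
    intro v
    rw [hF1, hF2]
    simp only
    rw [TN.smallE l₁ φ₁ θ₁ φ₁' θ₁' l₂ φ₂ θ₂ φ₂' θ₂' α β γ₁ γ₂ hα hβ hγ₁ hγ₂ v.1,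
      TN.bigE l₁ φ₁ θ₁ φ₁' θ₁' l₂ φ₂ θ₂ φ₂' θ₂' α β γ₁ γ₂ hα hβ hγ₁ hγ₂ (TN.wpad v.1),
      TN.Mx2_submatrix]
    refine TN.traceNorm_submatrix_le (TN.Mx_herm α β γ₁ γ₂ (TN.wpad v.1)) _ ?_
    intro x y hxy
    exact (Prod.mk.injEq _ _ _ _ ▸ hxy).2
  have hbound1 : ∀ v, F1 v ≤ B := fun v => le_trans (hpad v) (hbound2 _)
  have hne1 : Nonempty {v : EuclideanSpace ℂ (Fin 2) // ‖v‖ = 1} :=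
    ⟨⟨EuclideanSpace.single 0 1, by simp [EuclideanSpace.norm_single]⟩⟩
  have hne2 : Nonempty {w : EuclideanSpace ℂ (Fin 2 × Fin 2) // ‖w‖ = 1} :=
    ⟨⟨EuclideanSpace.single (0, 0) 1, by simp [EuclideanSpace.norm_single]⟩⟩
  have hbddF2 : BddAbove (Set.range F2) := ⟨B, by rintro x ⟨w, rfl⟩; exact hbound2 w⟩
  have hbddF1 : BddAbove (Set.range F1) := ⟨B, by rintro x ⟨v, rfl⟩; exact hbound1 v⟩
  have hS2leB : (⨆ w, F2 w) ≤ B := ciSup_le hbound2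
  have hS1leS2 : (⨆ v, F1 v) ≤ ⨆ w, F2 w := by
    refine ciSup_le fun v => le_trans (hpad v) (le_ciSup hbddF2 ⟨TN.wpad v.1, hpadmem v⟩)
  have hlow : ∀ (i0 : Fin 2) (c : ℝ), (c = if i0 = 0 then α else β) →
      2 * |c| ≤ F1 ⟨EuclideanSpace.single i0 1, by simp [EuclideanSpace.norm_single]⟩ := by
    intro i0 c hcdef
    rw [hF1]
    simp only
    rw [TN.smallE l₁ φ₁ θ₁ φ₁' θ₁' l₂ φ₂ θ₂ φ₂' θ₂' α β γ₁ γ₂ hα hβ hγ₁ hγ₂ _]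
    have hherm := TN.Mx2_herm α β γ₁ γ₂ (EuclideanSpace.single i0 1)
    have hs := TN.sum_abs_re_diag_le hherm
    rw [Fin.sum_univ_two] at hs
    fin_cases i0 <;>
      simp only [TN.Mx2, EuclideanSpace.single_apply, Fin.isValue, Fin.zero_eta, Fin.mk_one,
        if_true, if_false, reduceIte, star_one, star_zero, mul_one, mul_zero, one_mul, zero_mul,
        (by decide : ¬(1 : Fin 2) = 0), (by decide : ¬(0 : Fin 2) = 1),
        sub_zero, zero_sub, neg_zero, Complex.sub_re, Complex.zero_re, Complex.neg_re,
        Complex.ofReal_re, abs_neg] at hs hcdef ⊢ <;>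
      subst hcdef <;>
      linarith
  have hBleS1 : B ≤ ⨆ v, F1 v := by
    rcases le_total |α| |β| with h | h
    · rw [hB, max_eq_right h]
      exact le_trans (hlow 1 β (by norm_num)) (le_ciSup hbddF1 _)
    · rw [hB, max_eq_left h]
      exact le_trans (hlow 0 α (by norm_num)) (le_ciSup hbddF1 _)
  rw [hS1, hS2]
  exact le_antisymm (le_trans hS2leB hBleS1) hS1leS2
end
end
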